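/- arXiv:1108.0134 — 3 statements merged into one kernel-verified Lean document; each statement's English description precedes it below -/
import Mathlib

section
/- Let F(t,·) be a smooth family of Minkowski norms on ℝ^n satisfying the un-normalized Ricci flow ∂_t g_{ij} = −2Ric_{ij}. Then the mean Cartan torsion evolves by ∂_t I_i = −ρ_i, where ρ := g^{jk}Ric_{jk} and ρ_i := ∂ρ/∂y^i. -/
open scoped BigOperators

noncomputable section

/-- Partial derivative of `f` in the `i`-th coordinate direction. -/
def pd {n : ℕ} (i : Fin n) (f : (Fin n → ℝ) → ℝ) : (Fin n → ℝ) → ℝ :=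
  fun y => fderiv ℝ f y (Pi.single i 1)

/-- Fundamental tensor `g_{ij} = (1/2) ∂²(F²)/∂yⁱ∂yʲ`. -/
def gT {n : ℕ} (F : (Fin n → ℝ) → ℝ) (i j : Fin n) : (Fin n → ℝ) → ℝ :=
  fun y => (1 / 2 : ℝ) * pd i (pd j (fun z => F z ^ 2)) y

/-- The fundamental tensor viewed as a matrix. -/
def gMat {n : ℕ} (F : (Fin n → ℝ) → ℝ) (y : Fin n → ℝ) : Matrix (Fin n) (Fin n) ℝ :=
  Matrix.of fun i j => gT F i j y

/-- Inverse fundamental tensor `g^{ij}`. -/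
def gInv {n : ℕ} (F : (Fin n → ℝ) → ℝ) (i j : Fin n) : (Fin n → ℝ) → ℝ :=
  fun y => (gMat F y)⁻¹ i j

/-- Cartan tensor `C_{ijk} = (1/4) ∂³(F²)/∂yⁱ∂yʲ∂yᵏ`. -/
def cartanT {n : ℕ} (F : (Fin n → ℝ) → ℝ) (i j k : Fin n) : (Fin n → ℝ) → ℝ :=
  fun y => (1 / 4 : ℝ) * pd i (pd j (pd k (fun z => F z ^ 2))) y

/-- `y_i = (1/2) ∂(F²)/∂yⁱ`. -/
def yLow {n : ℕ} (F : (Fin n → ℝ) → ℝ) (i : Fin n) : (Fin n → ℝ) → ℝ :=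
  fun y => (1 / 2 : ℝ) * pd i (fun z => F z ^ 2) y

/-- Mean Cartan torsion `I_i = g^{jk} C_{ijk}`. -/
def mC {n : ℕ} (F : (Fin n → ℝ) → ℝ) (i : Fin n) : (Fin n → ℝ) → ℝ :=
  fun y => ∑ j, ∑ k, gInv F j k y * cartanT F i j k y

/-- Raised mean Cartan torsion `I^i = g^{ij} I_j`. -/
def mCUp {n : ℕ} (F : (Fin n → ℝ) → ℝ) (i : Fin n) : (Fin n → ℝ) → ℝ :=
  fun y => ∑ j, gInv F i j y * mC F j y

/-- `‖I‖² = I_i I^i`. -/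
def normI2 {n : ℕ} (F : (Fin n → ℝ) → ℝ) : (Fin n → ℝ) → ℝ :=
  fun y => ∑ i, mC F i y * mCUp F i y

/-- Angular metric `h_{ij} = g_{ij} − F⁻² y_i y_j`. -/
def angular {n : ℕ} (F : (Fin n → ℝ) → ℝ) (i j : Fin n) : (Fin n → ℝ) → ℝ :=
  fun y => gT F i j y - yLow F i y * yLow F j y / F y ^ 2

/-- `Ric_{ij} = (1/2) ∂²(R F²)/∂yⁱ∂yʲ`. -/
def RicT {n : ℕ} (F R : (Fin n → ℝ) → ℝ) (i j : Fin n) : (Fin n → ℝ) → ℝ :=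
  fun y => (1 / 2 : ℝ) * pd i (pd j (fun z => R z * F z ^ 2)) y

/-- `Ric^{ij} = g^{ik} g^{jl} Ric_{kl}`. -/
def RicUp {n : ℕ} (F R : (Fin n → ℝ) → ℝ) (i j : Fin n) : (Fin n → ℝ) → ℝ :=
  fun y => ∑ k, ∑ l, gInv F i k y * gInv F j l y * RicT F R k l y

/-- `ρ = g^{jk} Ric_{jk}`. -/
def rho {n : ℕ} (F R : (Fin n → ℝ) → ℝ) : (Fin n → ℝ) → ℝ :=
  fun y => ∑ j, ∑ k, gInv F j k y * RicT F R j k y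

/-- `ρ^i = g^{ij} ρ_j`. -/
def rhoUp {n : ℕ} (F R : (Fin n → ℝ) → ℝ) (i : Fin n) : (Fin n → ℝ) → ℝ :=
  fun y => ∑ j, gInv F i j y * pd j (rho F R) y

/-- A Minkowski norm on ℝⁿ: smooth away from `0`, positive, positively
1-homogeneous, with positive-definite fundamental tensor. -/
def IsMinkowski {n : ℕ} (F : (Fin n → ℝ) → ℝ) : Prop :=
  ContDiffOn ℝ (⊤ : ℕ∞) F {y : Fin n → ℝ | y ≠ 0} ∧
  (∀ y : Fin n → ℝ, y ≠ 0 → 0 < F y) ∧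
  (∀ y : Fin n → ℝ, y ≠ 0 → ∀ lam : ℝ, 0 < lam → F (lam • y) = lam * F y) ∧
  (∀ y : Fin n → ℝ, y ≠ 0 → ∀ v : Fin n → ℝ, v ≠ 0 →
    0 < ∑ i, ∑ j, gT F i j y * v i * v j)

/-- An (α,β)-Minkowski norm: `F = α · φ(β/α)` with `α` a Riemannian (Euclidean)
norm, `β` a linear form, and `φ` smooth and positive on an open interval
containing the range of `β/α`. -/
def IsAlphaBeta {n : ℕ} (F : (Fin n → ℝ) → ℝ) : Prop :=
  ∃ (a : Matrix (Fin n) (Fin n) ℝ) (b : Fin n → ℝ) (φ : ℝ → ℝ) (s : Set ℝ),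
    a.IsSymm ∧
    (∀ v : Fin n → ℝ, v ≠ 0 → 0 < ∑ i, ∑ j, a i j * v i * v j) ∧
    IsOpen s ∧ ContDiffOn ℝ (⊤ : ℕ∞) φ s ∧ (∀ x ∈ s, 0 < φ x) ∧
    (∀ y : Fin n → ℝ, y ≠ 0 →
      (∑ i, b i * y i) / Real.sqrt (∑ i, ∑ j, a i j * y i * y j) ∈ s ∧
      F y = Real.sqrt (∑ i, ∑ j, a i j * y i * y j) *
        φ ((∑ i, b i * y i) / Real.sqrt (∑ i, ∑ j, a i j * y i * y j)))

/-- Semi-C-reducibility of a Minkowski norm, with scalar functions `p`, `q`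
satisfying `p + q = 1`; in particular the mean Cartan torsion is nowhere zero. -/
def IsSemiCReducible {n : ℕ} (F p q : (Fin n → ℝ) → ℝ) : Prop :=
  (∀ y : Fin n → ℝ, y ≠ 0 → ∃ i, mC F i y ≠ 0) ∧
  (∀ y : Fin n → ℝ, y ≠ 0 → p y + q y = 1) ∧
  (∀ y : Fin n → ℝ, y ≠ 0 → ∀ i j k : Fin n,
    cartanT F i j k y =
      (p y / ((n : ℝ) + 1)) *
        (angular F i j y * mC F k y + angular F j k y * mC F i y +
          angular F k i y * mC F j y) +
      (q y / normI2 F y) * (mC F i y * mC F j y * mC F k y))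

/-- A smooth family, over `t ∈ J`, of functions on `ℝⁿ ∖ {0}`. -/
def SmoothFamily {n : ℕ} (J : Set ℝ) (F : ℝ → (Fin n → ℝ) → ℝ) : Prop :=
  ContDiffOn ℝ (⊤ : ℕ∞) (fun p : ℝ × (Fin n → ℝ) => F p.1 p.2)
    (J ×ˢ {y : Fin n → ℝ | y ≠ 0})


namespace MCE

open scoped ContDiff

/-! ### Generic calculus helpers -/

variable {X : Type*} [NormedAddCommGroup X] [NormedSpace ℝ X]

/-- Directional derivative operator. -/
def dv (v : X) (f : X → ℝ) : X → ℝ := fun p => fderiv ℝ f p v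

lemma le_inf {m : ℕ∞} : (m : WithTop ℕ∞) ≤ ∞ := WithTop.coe_le_coe.mpr le_top

lemma inf_add_one : ∞ + 1 ≤ ∞ := by
  have h : ((⊤ : ℕ∞) : WithTop ℕ∞) + ((1 : ℕ∞) : WithTop ℕ∞) = (((⊤ + 1 : ℕ∞)) : WithTop ℕ∞) := by
    norm_cast
  rw [show ((1 : WithTop ℕ∞)) = ((1 : ℕ∞) : WithTop ℕ∞) by norm_cast, h, top_add]

lemma dv_contDiffOn {f : X → ℝ} {U : Set X} (hU : IsOpen U)
    (hf : ContDiffOn ℝ (⊤ : ℕ∞) f U) (v : X) :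
    ContDiffOn ℝ (⊤ : ℕ∞) (dv v f) U :=
  (hf.fderiv_of_isOpen hU inf_add_one).clm_apply contDiffOn_const

lemma dv_differentiableAt {f : X → ℝ} {U : Set X} (hU : IsOpen U)
    (hf : ContDiffOn ℝ (⊤ : ℕ∞) f U) (v : X) {p : X} (hp : p ∈ U) :
    DifferentiableAt ℝ (dv v f) p :=
  ((dv_contDiffOn hU hf v).contDiffAt (hU.mem_nhds hp)).differentiableAt (by simp)

lemma differentiableAt_of_contDiffOn {f : X → ℝ} {U : Set X} (hU : IsOpen U)
    (hf : ContDiffOn ℝ (⊤ : ℕ∞) f U) {p : X} (hp : p ∈ U) :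
    DifferentiableAt ℝ f p :=
  (hf.contDiffAt (hU.mem_nhds hp)).differentiableAt (by simp)

lemma dv_symm {f : X → ℝ} {U : Set X} (hU : IsOpen U)
    (hf : ContDiffOn ℝ (⊤ : ℕ∞) f U) {p : X} (hp : p ∈ U) (v w : X) :
    dv w (dv v f) p = dv v (dv w f) p := by
  have hfa : ContDiffAt ℝ (⊤ : ℕ∞) f p := hf.contDiffAt (hU.mem_nhds hp)
  have hsym := hfa.isSymmSndFDerivAt (by rw [minSmoothness_of_isRCLikeNormedField]; exact le_inf (m := 2))
  have hd : DifferentiableAt ℝ (fderiv ℝ f) p :=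
    (hfa.fderiv_right (m := (⊤ : ℕ∞)) inf_add_one).differentiableAt (by simp)
  have key : ∀ u : X, fderiv ℝ (dv u f) p = (fderiv ℝ (fderiv ℝ f) p).flip u := by
    intro u
    have h2 := fderiv_clm_apply (c := fderiv ℝ f) (u := fun _ => u) hd
      (differentiableAt_const u)
    show fderiv ℝ (fun y => fderiv ℝ f y u) p = _
    simpa using h2
  show fderiv ℝ (dv v f) p w = fderiv ℝ (dv w f) p v
  rw [key v, key w, ContinuousLinearMap.flip_apply, ContinuousLinearMap.flip_apply]
  exact hsym.eq w v

/-! ### Slice lemmas -/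

variable {n : ℕ}

lemma pd_congr {f g : (Fin n → ℝ) → ℝ} {z : Fin n → ℝ} (h : f =ᶠ[nhds z] g) (j : Fin n) :
    pd j f z = pd j g z := by
  unfold pd
  rw [h.fderiv_eq]

lemma hasFDerivAt_slice_y {f : ℝ × (Fin n → ℝ) → ℝ} {p : ℝ × (Fin n → ℝ)}
    (hf : DifferentiableAt ℝ f p) :
    HasFDerivAt (fun z => f (p.1, z))
      ((fderiv ℝ f p).comp (ContinuousLinearMap.inr ℝ ℝ (Fin n → ℝ))) p.2 := by
  have h1 : HasFDerivAt (fun z : Fin n → ℝ => (p.1, z))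
      (ContinuousLinearMap.inr ℝ ℝ (Fin n → ℝ)) p.2 := hasFDerivAt_prodMk_right p.1 p.2
  exact hf.hasFDerivAt.comp p.2 h1

lemma pd_slice {f : ℝ × (Fin n → ℝ) → ℝ} {p : ℝ × (Fin n → ℝ)}
    (hf : DifferentiableAt ℝ f p) (i : Fin n) :
    pd i (fun z => f (p.1, z)) p.2 = dv (0, Pi.single i 1) f p := by
  show fderiv ℝ (fun z => f (p.1, z)) p.2 (Pi.single i 1) = _
  rw [(hasFDerivAt_slice_y hf).fderiv]
  rfl

lemma hasDerivAt_slice_t {f : ℝ × (Fin n → ℝ) → ℝ} {p : ℝ × (Fin n → ℝ)}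
    (hf : DifferentiableAt ℝ f p) :
    HasDerivAt (fun s => f (s, p.2)) (dv ((1 : ℝ), (0 : Fin n → ℝ)) f p) p.1 := by
  have h1 : HasFDerivAt (fun s : ℝ => (s, p.2))
      (ContinuousLinearMap.inl ℝ ℝ (Fin n → ℝ)) p.1 := hasFDerivAt_prodMk_left p.1 p.2
  have h2 := (hf.hasFDerivAt.comp p.1 h1).hasDerivAt
  exact h2

/-! ### Glue: `pd` of slices vs directional derivatives of the joint function -/

lemma glue1 {J : Set ℝ} (hJ : IsOpen J) {f : ℝ × (Fin n → ℝ) → ℝ}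
    (hf : ContDiffOn ℝ (⊤ : ℕ∞) f (J ×ˢ {z : Fin n → ℝ | z ≠ 0}))
    {q : ℝ × (Fin n → ℝ)} (hq : q ∈ J ×ˢ {z : Fin n → ℝ | z ≠ 0}) (k : Fin n) :
    pd k (fun z => f (q.1, z)) q.2 = dv (0, Pi.single k 1) f q :=
  pd_slice (differentiableAt_of_contDiffOn (hJ.prod isOpen_ne) hf hq) k

lemma glue2 {J : Set ℝ} (hJ : IsOpen J) {f : ℝ × (Fin n → ℝ) → ℝ}
    (hf : ContDiffOn ℝ (⊤ : ℕ∞) f (J ×ˢ {z : Fin n → ℝ | z ≠ 0}))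
    {q : ℝ × (Fin n → ℝ)} (hq : q ∈ J ×ˢ {z : Fin n → ℝ | z ≠ 0}) (j k : Fin n) :
    pd j (pd k (fun z => f (q.1, z))) q.2
      = dv (0, Pi.single j 1) (dv (0, Pi.single k 1) f) q := by
  have h1 : pd k (fun z => f (q.1, z)) =ᶠ[nhds q.2]
      fun z => dv (0, Pi.single k 1) f (q.1, z) := by
    filter_upwards [isOpen_ne.mem_nhds hq.2] with z hz
    exact glue1 hJ hf (q := (q.1, z)) ⟨hq.1, hz⟩ k
  rw [pd_congr h1 j]
  exact pd_slice (dv_differentiableAt (hJ.prod isOpen_ne) hf _ hq) j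

lemma glue3 {J : Set ℝ} (hJ : IsOpen J) {f : ℝ × (Fin n → ℝ) → ℝ}
    (hf : ContDiffOn ℝ (⊤ : ℕ∞) f (J ×ˢ {z : Fin n → ℝ | z ≠ 0}))
    {q : ℝ × (Fin n → ℝ)} (hq : q ∈ J ×ˢ {z : Fin n → ℝ | z ≠ 0}) (i j k : Fin n) :
    pd i (pd j (pd k (fun z => f (q.1, z)))) q.2
      = dv (0, Pi.single i 1) (dv (0, Pi.single j 1) (dv (0, Pi.single k 1) f)) q := by
  have h1 : pd j (pd k (fun z => f (q.1, z))) =ᶠ[nhds q.2]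
      fun z => dv (0, Pi.single j 1) (dv (0, Pi.single k 1) f) (q.1, z) := by
    filter_upwards [isOpen_ne.mem_nhds hq.2] with z hz
    exact glue2 hJ hf (q := (q.1, z)) ⟨hq.1, hz⟩ j k
  rw [pd_congr h1 i]
  exact pd_slice (dv_differentiableAt (hJ.prod isOpen_ne)
    (dv_contDiffOn (hJ.prod isOpen_ne) hf _) _ hq) i

/-! ### Determinant calculus -/

variable {m : ℕ}

lemma updateRow_det_eq (A : Matrix (Fin m) (Fin m) ℝ) (i : Fin m) (v : Fin m → ℝ) :
    (A.updateRow i v).det = ∑ k, v k * A.adjugate k i := by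
  rw [← Matrix.cramer_transpose_apply]
  have hv : v = ∑ k, v k • (Pi.single k 1 : Fin m → ℝ) := by
    funext j
    simp [Pi.single_apply, Finset.sum_apply]
  conv_lhs => rw [hv]
  rw [map_sum]
  simp only [Finset.sum_apply, map_smul, Pi.smul_apply, smul_eq_mul]
  exact Finset.sum_congr rfl fun k _ => rfl

lemma sum_updateRow_det (A B : Matrix (Fin m) (Fin m) ℝ) :
    ∑ i, (A.updateRow i (B i)).det =
      ∑ σ : Equiv.Perm (Fin m), ((Equiv.Perm.sign σ : ℤ) : ℝ) *
        ∑ j, (∏ j' ∈ Finset.univ.erase j, A (σ j') j') * B (σ j) j := by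
  have key : ∀ (i : Fin m) (σ : Equiv.Perm (Fin m)),
      (∏ j, (A.updateRow i (B i)) (σ j) j) =
        B i (σ.symm i) * ∏ j' ∈ Finset.univ.erase (σ.symm i), A (σ j') j' := by
    intro i σ
    rw [← Finset.mul_prod_erase Finset.univ _ (Finset.mem_univ (σ.symm i))]
    congr 1
    · rw [Equiv.apply_symm_apply, Matrix.updateRow_self]
    · refine Finset.prod_congr rfl fun j hj => ?_
      rw [Matrix.updateRow_ne]
      intro h
      exact (Finset.mem_erase.1 hj).1 (by rw [← h, Equiv.symm_apply_apply])
  simp only [Matrix.det_apply', key]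
  rw [Finset.sum_comm]
  refine Finset.sum_congr rfl fun σ _ => ?_
  rw [Finset.mul_sum]
  refine (Fintype.sum_equiv σ _ _ fun j => ?_).symm
  simp [Equiv.symm_apply_apply]
  ring

lemma det_deriv_key (A B : Matrix (Fin m) (Fin m) ℝ) :
    ∑ σ : Equiv.Perm (Fin m), ((Equiv.Perm.sign σ : ℤ) : ℝ) *
        ∑ j, (∏ j' ∈ Finset.univ.erase j, A (σ j') j') * B (σ j) j
      = ∑ i, ∑ k, A.adjugate k i * B i k := by
  rw [← sum_updateRow_det]
  refine Finset.sum_congr rfl fun i _ => ?_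
  rw [updateRow_det_eq]
  exact Finset.sum_congr rfl fun k _ => mul_comm _ _

lemma det_hasFDerivAt {M : X → Matrix (Fin m) (Fin m) ℝ}
    {M' : Fin m → Fin m → X →L[ℝ] ℝ} {x : X}
    (h : ∀ i j, HasFDerivAt (fun e => M e i j) (M' i j) x) :
    HasFDerivAt (fun e => (M e).det)
      (∑ i, ∑ k, (M x).adjugate k i • M' i k) x := by
  have h1 : ∀ σ : Equiv.Perm (Fin m), HasFDerivAt (fun e => ∏ j, M e (σ j) j)
      (∑ j, (∏ j' ∈ Finset.univ.erase j, M x (σ j') j') • M' (σ j) j) x :=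
    fun σ => HasFDerivAt.finset_prod (fun j _ => h (σ j) j)
  have h2 : HasFDerivAt (fun e => (M e).det)
      (∑ σ : Equiv.Perm (Fin m), (((Equiv.Perm.sign σ : ℤ) : ℝ)) •
        (∑ j, (∏ j' ∈ Finset.univ.erase j, M x (σ j') j') • M' (σ j) j)) x := by
    have hdet : (fun e => (M e).det) = fun e => ∑ σ : Equiv.Perm (Fin m),
        ((Equiv.Perm.sign σ : ℤ) : ℝ) * ∏ j, M e (σ j) j := by
      funext e; rw [Matrix.det_apply']
    rw [hdet]
    exact HasFDerivAt.fun_sum (fun σ _ => (h1 σ).const_mul _)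
  refine h2.congr_fderiv ?_
  ext v
  simp only [ContinuousLinearMap.coe_sum', Finset.sum_apply,
    ContinuousLinearMap.coe_smul', Pi.smul_apply, smul_eq_mul]
  exact det_deriv_key (M x) (fun i k => M' i k v)

lemma contDiffOn_det {M : X → Matrix (Fin m) (Fin m) ℝ} {U : Set X}
    (h : ∀ i j, ContDiffOn ℝ (⊤ : ℕ∞) (fun p => M p i j) U) :
    ContDiffOn ℝ (⊤ : ℕ∞) (fun p => (M p).det) U := by
  have hdet : (fun p => (M p).det) = fun p => ∑ σ : Equiv.Perm (Fin m),
      ((Equiv.Perm.sign σ : ℤ) : ℝ) * ∏ j, M p (σ j) j := by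
    funext p; rw [Matrix.det_apply']
  rw [hdet]
  refine ContDiffOn.sum fun σ _ => ContDiffOn.mul contDiffOn_const ?_
  have key : ∀ s : Finset (Fin m),
      ContDiffOn ℝ (⊤ : ℕ∞) (fun p => ∏ j ∈ s, M p (σ j) j) U := by
    intro s
    induction s using Finset.induction_on with
    | empty => simpa using contDiffOn_const
    | insert _ _ hx ih => simp only [Finset.prod_insert hx]; exact (h _ _).mul ih
  exact key Finset.univ

/-! ### The specific setting -/

/-- The open domain `(a,b) × (ℝⁿ ∖ {0})`. -/
abbrev US (n : ℕ) (a b : ℝ) : Set (ℝ × (Fin n → ℝ)) :=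
  (Set.Ioo a b) ×ˢ {z : Fin n → ℝ | z ≠ 0}

lemma usOpen {n : ℕ} {a b : ℝ} : IsOpen (US n a b) := isOpen_Ioo.prod isOpen_ne

variable {a b : ℝ} {F R : ℝ → (Fin n → ℝ) → ℝ}

/-- The joint function `(t,y) ↦ F t y ^ 2`. -/
def Gf (F : ℝ → (Fin n → ℝ) → ℝ) : ℝ × (Fin n → ℝ) → ℝ := fun q => F q.1 q.2 ^ 2

/-- The joint function `(t,y) ↦ R t y * F t y ^ 2`. -/
def Hf (F R : ℝ → (Fin n → ℝ) → ℝ) : ℝ × (Fin n → ℝ) → ℝ :=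
  fun q => R q.1 q.2 * F q.1 q.2 ^ 2

/-- The fundamental tensor as a joint function. -/
def gm (F : ℝ → (Fin n → ℝ) → ℝ) (j k : Fin n) : ℝ × (Fin n → ℝ) → ℝ :=
  fun q => (1 / 2 : ℝ) * dv ((0 : ℝ), (Pi.single j 1 : Fin n → ℝ))
    (dv ((0 : ℝ), (Pi.single k 1 : Fin n → ℝ)) (Gf F)) q

/-- The Ricci tensor as a joint function. -/
def Nm (F R : ℝ → (Fin n → ℝ) → ℝ) (j k : Fin n) : ℝ × (Fin n → ℝ) → ℝ :=
  fun q => (1 / 2 : ℝ) * dv ((0 : ℝ), (Pi.single j 1 : Fin n → ℝ))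
    (dv ((0 : ℝ), (Pi.single k 1 : Fin n → ℝ)) (Hf F R)) q

/-- The fundamental matrix as a joint function. -/
def Amat (F : ℝ → (Fin n → ℝ) → ℝ) : ℝ × (Fin n → ℝ) → Matrix (Fin n) (Fin n) ℝ :=
  fun q => Matrix.of fun j k => gm F j k q

/-- The determinant of the fundamental matrix. -/
def Dd (F : ℝ → (Fin n → ℝ) → ℝ) : ℝ × (Fin n → ℝ) → ℝ := fun q => (Amat F q).det

lemma hGsm (hF : SmoothFamily (Set.Ioo a b) F) :
    ContDiffOn ℝ (⊤ : ℕ∞) (Gf F) (US n a b) :=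
  (ContDiffOn.of_le hF (by simp)).pow 2

lemma hHsm (hF : SmoothFamily (Set.Ioo a b) F) (hR : SmoothFamily (Set.Ioo a b) R) :
    ContDiffOn ℝ (⊤ : ℕ∞) (Hf F R) (US n a b) :=
  (ContDiffOn.of_le hR (by simp)).mul ((ContDiffOn.of_le hF (by simp)).pow 2)

lemma smooth_gm (hF : SmoothFamily (Set.Ioo a b) F) (j k : Fin n) :
    ContDiffOn ℝ (⊤ : ℕ∞) (gm F j k) (US n a b) :=
  contDiffOn_const.mul (dv_contDiffOn usOpen (dv_contDiffOn usOpen (hGsm hF) _) _)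

lemma smooth_Dd (hF : SmoothFamily (Set.Ioo a b) F) :
    ContDiffOn ℝ (⊤ : ℕ∞) (Dd F) (US n a b) :=
  contDiffOn_det (M := Amat F) (fun j k => smooth_gm hF j k)

lemma g1 (hF : SmoothFamily (Set.Ioo a b) F) {q : ℝ × (Fin n → ℝ)} (hq : q ∈ US n a b)
    (j k : Fin n) : gT (F q.1) j k q.2 = gm F j k q := by
  show (1 / 2 : ℝ) * pd j (pd k (fun z => F q.1 z ^ 2)) q.2 = _
  rw [show (fun z => F q.1 z ^ 2) = (fun z => Gf F (q.1, z)) from rfl,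
    glue2 isOpen_Ioo (hGsm hF) hq j k]
  rfl

lemma r1 (hF : SmoothFamily (Set.Ioo a b) F) (hR : SmoothFamily (Set.Ioo a b) R)
    {q : ℝ × (Fin n → ℝ)} (hq : q ∈ US n a b) (j k : Fin n) :
    RicT (F q.1) (R q.1) j k q.2 = Nm F R j k q := by
  show (1 / 2 : ℝ) * pd j (pd k (fun z => R q.1 z * F q.1 z ^ 2)) q.2 = _
  rw [show (fun z => R q.1 z * F q.1 z ^ 2) = (fun z => Hf F R (q.1, z)) from rfl,
    glue2 isOpen_Ioo (hHsm hF hR) hq j k]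
  rfl

lemma c1 (hF : SmoothFamily (Set.Ioo a b) F) {q : ℝ × (Fin n → ℝ)} (hq : q ∈ US n a b)
    (i j k : Fin n) :
    cartanT (F q.1) i j k q.2
      = (1 / 2 : ℝ) * dv ((0 : ℝ), (Pi.single i 1 : Fin n → ℝ)) (gm F j k) q := by
  have hG := hGsm hF
  have h3 := glue3 isOpen_Ioo hG hq i j k
  have hd : dv ((0 : ℝ), (Pi.single i 1 : Fin n → ℝ)) (gm F j k) q
      = (1 / 2 : ℝ) * dv ((0 : ℝ), (Pi.single i 1 : Fin n → ℝ))
          (dv ((0 : ℝ), (Pi.single j 1 : Fin n → ℝ))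
            (dv ((0 : ℝ), (Pi.single k 1 : Fin n → ℝ)) (Gf F))) q := by
    show fderiv ℝ (fun q' => (1 / 2 : ℝ) * dv ((0 : ℝ), (Pi.single j 1 : Fin n → ℝ))
        (dv ((0 : ℝ), (Pi.single k 1 : Fin n → ℝ)) (Gf F)) q') q _ = _
    rw [fderiv_const_mul (dv_differentiableAt usOpen (dv_contDiffOn usOpen hG _) _ hq)
      (1 / 2 : ℝ)]
    simp [dv]
  show (1 / 4 : ℝ) * pd i (pd j (pd k (fun z => F q.1 z ^ 2))) q.2 = _
  rw [show (fun z => F q.1 z ^ 2) = (fun z => Gf F (q.1, z)) from rfl, h3, hd]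
  ring

lemma d0 (hF : SmoothFamily (Set.Ioo a b) F) (hMink : ∀ t ∈ Set.Ioo a b, IsMinkowski (F t))
    {q : ℝ × (Fin n → ℝ)} (hq : q ∈ US n a b) : Dd F q ≠ 0 := by
  intro hdet
  obtain ⟨v, hv0, hMv⟩ := Matrix.exists_mulVec_eq_zero_iff.mpr hdet
  have hpos := (hMink q.1 hq.1).2.2.2 q.2 hq.2 v hv0
  have hrow : ∀ i', ∑ j', gm F i' j' q * v j' = 0 := by
    intro i'
    have h := congrFun hMv i'
    simpa [Matrix.mulVec, dotProduct, Amat] using h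
  have hzero : ∑ i', ∑ j', gT (F q.1) i' j' q.2 * v i' * v j' = 0 := by
    have hterm : ∀ i', ∑ j', gT (F q.1) i' j' q.2 * v i' * v j'
        = v i' * ∑ j', gm F i' j' q * v j' := by
      intro i'
      rw [Finset.mul_sum]
      refine Finset.sum_congr rfl fun j' _ => ?_
      rw [g1 hF hq i' j']
      ring
    rw [Finset.sum_congr rfl fun i' _ => hterm i']
    simp [hrow]
  rw [hzero] at hpos
  exact lt_irrefl 0 hpos

lemma gm_symm (hF : SmoothFamily (Set.Ioo a b) F) {q : ℝ × (Fin n → ℝ)} (hq : q ∈ US n a b)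
    (j k : Fin n) : gm F j k q = gm F k j q :=
  congrArg ((1 / 2 : ℝ) * ·) (dv_symm usOpen (hGsm hF) hq _ _)

lemma adj_symm (hF : SmoothFamily (Set.Ioo a b) F) {q : ℝ × (Fin n → ℝ)} (hq : q ∈ US n a b)
    (j k : Fin n) : (Amat F q).adjugate j k = (Amat F q).adjugate k j := by
  have hA : (Amat F q).transpose = Amat F q := by
    ext j' k'
    exact gm_symm hF hq k' j'
  have h1 : ((Amat F q).adjugate).transpose = (Amat F q).adjugate := by
    rw [Matrix.adjugate_transpose, hA]
  conv_lhs => rw [← h1]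
  simp [Matrix.transpose_apply]

lemma jac (hF : SmoothFamily (Set.Ioo a b) F) {q : ℝ × (Fin n → ℝ)} (hq : q ∈ US n a b)
    (v : ℝ × (Fin n → ℝ)) :
    dv v (Dd F) q = ∑ j, ∑ k, (Amat F q).adjugate k j * dv v (gm F j k) q := by
  have hder := det_hasFDerivAt (M := Amat F) (M' := fun j k => fderiv ℝ (gm F j k) q) (x := q)
    (fun j k => (differentiableAt_of_contDiffOn usOpen (smooth_gm hF j k) hq).hasFDerivAt)
  show fderiv ℝ (Dd F) q v = _
  rw [show Dd F = fun e => (Amat F e).det from rfl, hder.fderiv]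
  simp only [ContinuousLinearMap.coe_sum', Finset.sum_apply, ContinuousLinearMap.coe_smul',
    Pi.smul_apply, smul_eq_mul]
  rfl

lemma gInv_eq (hF : SmoothFamily (Set.Ioo a b) F) {q : ℝ × (Fin n → ℝ)} (hq : q ∈ US n a b)
    (j k : Fin n) : gInv (F q.1) j k q.2 = (Dd F q)⁻¹ * (Amat F q).adjugate j k := by
  show (gMat (F q.1) q.2)⁻¹ j k = _
  have hgmat : gMat (F q.1) q.2 = Amat F q := by
    ext j' k'
    exact g1 hF hq j' k'
  rw [hgmat, Matrix.inv_def, Ring.inverse_eq_inv]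
  rfl

lemma claimA (hF : SmoothFamily (Set.Ioo a b) F) {q : ℝ × (Fin n → ℝ)} (hq : q ∈ US n a b)
    (i' : Fin n) :
    mC (F q.1) i' q.2
      = (1 / 2 : ℝ) * dv ((0 : ℝ), (Pi.single i' 1 : Fin n → ℝ)) (Dd F) q * (Dd F q)⁻¹ := by
  calc mC (F q.1) i' q.2
      = ∑ j, ∑ k, (Dd F q)⁻¹ * (Amat F q).adjugate j k *
          ((1 / 2 : ℝ) * dv ((0 : ℝ), (Pi.single i' 1 : Fin n → ℝ)) (gm F j k) q) := by
        show (∑ j, ∑ k, gInv (F q.1) j k q.2 * cartanT (F q.1) i' j k q.2) = _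
        refine Finset.sum_congr rfl fun j _ => Finset.sum_congr rfl fun k _ => ?_
        rw [gInv_eq hF hq j k, c1 hF hq i' j k]
    _ = (1 / 2 : ℝ) * (Dd F q)⁻¹ *
          ∑ j, ∑ k, (Amat F q).adjugate k j *
            dv ((0 : ℝ), (Pi.single i' 1 : Fin n → ℝ)) (gm F j k) q := by
        rw [Finset.mul_sum]
        refine Finset.sum_congr rfl fun j _ => ?_
        rw [Finset.mul_sum]
        refine Finset.sum_congr rfl fun k _ => ?_
        rw [adj_symm hF hq j k]
        ring
    _ = _ := by
        rw [← jac hF hq _]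
        ring

lemma claimB (hF : SmoothFamily (Set.Ioo a b) F) (hR : SmoothFamily (Set.Ioo a b) R)
    (hflow : ∀ t ∈ Set.Ioo a b, ∀ y : Fin n → ℝ, y ≠ 0 → ∀ i j : Fin n,
      deriv (fun s => gT (F s) i j y) t = -2 * RicT (F t) (R t) i j y)
    {q : ℝ × (Fin n → ℝ)} (hq : q ∈ US n a b) :
    rho (F q.1) (R q.1) q.2
      = (-(1 / 2 : ℝ) * dv ((1 : ℝ), (0 : Fin n → ℝ)) (Dd F) q) * (Dd F q)⁻¹ := by
  have hNt : ∀ j k : Fin n, dv ((1 : ℝ), (0 : Fin n → ℝ)) (gm F j k) q = -2 * Nm F R j k q := by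
    intro j k
    have hd := (hasDerivAt_slice_t (p := q)
      (differentiableAt_of_contDiffOn usOpen (smooth_gm hF j k) hq)).deriv
    have heq : (fun s => gm F j k (s, q.2)) =ᶠ[nhds q.1] fun s => gT (F s) j k q.2 := by
      filter_upwards [isOpen_Ioo.mem_nhds hq.1] with s hs
      exact (g1 hF (q := (s, q.2)) ⟨hs, hq.2⟩ j k).symm
    calc dv ((1 : ℝ), (0 : Fin n → ℝ)) (gm F j k) q
        = deriv (fun s => gm F j k (s, q.2)) q.1 := hd.symm
      _ = deriv (fun s => gT (F s) j k q.2) q.1 := heq.deriv_eq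
      _ = -2 * RicT (F q.1) (R q.1) j k q.2 := hflow q.1 hq.1 q.2 hq.2 j k
      _ = -2 * Nm F R j k q := by rw [r1 hF hR hq j k]
  have hDt : dv ((1 : ℝ), (0 : Fin n → ℝ)) (Dd F) q
      = -2 * ∑ j, ∑ k, (Amat F q).adjugate k j * Nm F R j k q := by
    rw [jac hF hq _, Finset.mul_sum]
    refine Finset.sum_congr rfl fun j _ => ?_
    rw [Finset.mul_sum]
    refine Finset.sum_congr rfl fun k _ => ?_
    rw [hNt j k]
    ring
  calc rho (F q.1) (R q.1) q.2
      = ∑ j, ∑ k, (Dd F q)⁻¹ * (Amat F q).adjugate j k * Nm F R j k q := by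
        show (∑ j, ∑ k, gInv (F q.1) j k q.2 * RicT (F q.1) (R q.1) j k q.2) = _
        refine Finset.sum_congr rfl fun j _ => Finset.sum_congr rfl fun k _ => ?_
        rw [gInv_eq hF hq j k, r1 hF hR hq j k]
    _ = (Dd F q)⁻¹ * ∑ j, ∑ k, (Amat F q).adjugate k j * Nm F R j k q := by
        rw [Finset.mul_sum]
        refine Finset.sum_congr rfl fun j _ => ?_
        rw [Finset.mul_sum]
        refine Finset.sum_congr rfl fun k _ => ?_
        rw [adj_symm hF hq j k]
        ring
    _ = _ := by
        rw [hDt]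
        ring

end MCE

theorem mean_cartan_evolution
    {n : ℕ} (a b : ℝ) (F R : ℝ → (Fin n → ℝ) → ℝ)
    (hF : SmoothFamily (Set.Ioo a b) F)
    (hMink : ∀ t ∈ Set.Ioo a b, IsMinkowski (F t))
    (hR : SmoothFamily (Set.Ioo a b) R)
    (hRhom : ∀ t ∈ Set.Ioo a b, ∀ y : Fin n → ℝ, y ≠ 0 →
      ∀ lam : ℝ, 0 < lam → R t (lam • y) = R t y)
    (hflow : ∀ t ∈ Set.Ioo a b, ∀ y : Fin n → ℝ, y ≠ 0 → ∀ i j : Fin n,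
      deriv (fun s => gT (F s) i j y) t = -2 * RicT (F t) (R t) i j y)
    :
    ∀ t ∈ Set.Ioo a b, ∀ y : Fin n → ℝ, y ≠ 0 → ∀ i : Fin n,
      deriv (fun s => mC (F s) i y) t = - pd i (rho (F t) (R t)) y := by
  intro t ht y hy i
  classical
  open MCE in
  have hp : ((t, y) : ℝ × (Fin n → ℝ)) ∈ US n a b := ⟨ht, hy⟩
  have hDd := MCE.smooth_Dd hF
  have hne : MCE.Dd F (t, y) ≠ 0 := MCE.d0 hF hMink hp
  -- the left-hand side
  have hLeft : deriv (fun s => mC (F s) i y) t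
      = deriv (fun s => (1 / 2 : ℝ) * MCE.dv ((0 : ℝ), (Pi.single i 1 : Fin n → ℝ))
          (MCE.Dd F) (s, y) * (MCE.Dd F (s, y))⁻¹) t := by
    apply Filter.EventuallyEq.deriv_eq
    filter_upwards [isOpen_Ioo.mem_nhds ht] with s hs
    exact MCE.claimA hF (q := (s, y)) ⟨hs, hy⟩ i
  have h1 : HasDerivAt (fun s => MCE.dv ((0 : ℝ), (Pi.single i 1 : Fin n → ℝ))
        (MCE.Dd F) (s, y))
      (MCE.dv ((1 : ℝ), (0 : Fin n → ℝ))
        (MCE.dv ((0 : ℝ), (Pi.single i 1 : Fin n → ℝ)) (MCE.Dd F)) (t, y)) t :=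
    MCE.hasDerivAt_slice_t (p := (t, y)) (MCE.dv_differentiableAt MCE.usOpen hDd _ hp)
  have h2 : HasDerivAt (fun s => MCE.Dd F (s, y))
      (MCE.dv ((1 : ℝ), (0 : Fin n → ℝ)) (MCE.Dd F) (t, y)) t :=
    MCE.hasDerivAt_slice_t (p := (t, y))
      (MCE.differentiableAt_of_contDiffOn MCE.usOpen hDd hp)
  have h3 : HasDerivAt (fun s => (1 / 2 : ℝ) * MCE.dv ((0 : ℝ), (Pi.single i 1 : Fin n → ℝ))
        (MCE.Dd F) (s, y) * (MCE.Dd F (s, y))⁻¹)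
      ((1 / 2 : ℝ) * MCE.dv ((1 : ℝ), (0 : Fin n → ℝ))
          (MCE.dv ((0 : ℝ), (Pi.single i 1 : Fin n → ℝ)) (MCE.Dd F)) (t, y)
          * (MCE.Dd F (t, y))⁻¹
        + (1 / 2 : ℝ) * MCE.dv ((0 : ℝ), (Pi.single i 1 : Fin n → ℝ)) (MCE.Dd F) (t, y) *
          (-(MCE.dv ((1 : ℝ), (0 : Fin n → ℝ)) (MCE.Dd F) (t, y)) / MCE.Dd F (t, y) ^ 2)) t :=
    (h1.const_mul (1 / 2 : ℝ)).mul (h2.inv hne)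
  -- the right-hand side
  have hW : ContDiffOn ℝ (⊤ : ℕ∞)
      (fun q => (-(1 / 2 : ℝ) * MCE.dv ((1 : ℝ), (0 : Fin n → ℝ)) (MCE.Dd F) q)
        * (MCE.Dd F q)⁻¹) (US n a b) :=
    (contDiffOn_const.mul (MCE.dv_contDiffOn MCE.usOpen hDd _)).mul
      (hDd.inv (fun q hq => MCE.d0 hF hMink hq))
  have heq : rho (F t) (R t) =ᶠ[nhds y]
      fun z => (-(1 / 2 : ℝ) * MCE.dv ((1 : ℝ), (0 : Fin n → ℝ)) (MCE.Dd F) (t, z))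
        * (MCE.Dd F (t, z))⁻¹ := by
    filter_upwards [isOpen_ne.mem_nhds hy] with z hz
    exact MCE.claimB hF hR hflow (q := (t, z)) ⟨ht, hz⟩
  have hRight : pd i (rho (F t) (R t)) y
      = MCE.dv ((0 : ℝ), (Pi.single i 1 : Fin n → ℝ))
          (fun q => (-(1 / 2 : ℝ) * MCE.dv ((1 : ℝ), (0 : Fin n → ℝ)) (MCE.Dd F) q)
            * (MCE.Dd F q)⁻¹) (t, y) := by
    rw [MCE.pd_congr heq i]
    exact MCE.pd_slice (p := (t, y))
      (MCE.differentiableAt_of_contDiffOn MCE.usOpen hW hp) i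
  -- computing the right-hand side derivative
  have hc : HasFDerivAt (fun q => -(1 / 2 : ℝ) * MCE.dv ((1 : ℝ), (0 : Fin n → ℝ)) (MCE.Dd F) q)
      ((-(1 / 2 : ℝ)) • fderiv ℝ (MCE.dv ((1 : ℝ), (0 : Fin n → ℝ)) (MCE.Dd F)) (t, y)) (t, y) :=
    ((MCE.dv_differentiableAt MCE.usOpen hDd _ hp).hasFDerivAt).const_mul (-(1 / 2 : ℝ))
  have hd' : HasFDerivAt (fun q => (MCE.Dd F q)⁻¹)
      ((-(MCE.Dd F (t, y) ^ 2)⁻¹) • fderiv ℝ (MCE.Dd F) (t, y)) (t, y) :=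
    (hasDerivAt_inv hne).comp_hasFDerivAt (t, y)
      (MCE.differentiableAt_of_contDiffOn MCE.usOpen hDd hp).hasFDerivAt
  have hWfd : HasFDerivAt
      (fun q => (-(1 / 2 : ℝ) * MCE.dv ((1 : ℝ), (0 : Fin n → ℝ)) (MCE.Dd F) q)
        * (MCE.Dd F q)⁻¹)
      ((-(1 / 2 : ℝ) * MCE.dv ((1 : ℝ), (0 : Fin n → ℝ)) (MCE.Dd F) (t, y)) •
          ((-(MCE.Dd F (t, y) ^ 2)⁻¹) • fderiv ℝ (MCE.Dd F) (t, y))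
        + (MCE.Dd F (t, y))⁻¹ •
          ((-(1 / 2 : ℝ)) • fderiv ℝ (MCE.dv ((1 : ℝ), (0 : Fin n → ℝ)) (MCE.Dd F)) (t, y)))
      (t, y) := hc.mul hd'
  have hdvW : MCE.dv ((0 : ℝ), (Pi.single i 1 : Fin n → ℝ))
      (fun q => (-(1 / 2 : ℝ) * MCE.dv ((1 : ℝ), (0 : Fin n → ℝ)) (MCE.Dd F) q)
        * (MCE.Dd F q)⁻¹) (t, y)
      = (-(1 / 2 : ℝ) * MCE.dv ((1 : ℝ), (0 : Fin n → ℝ)) (MCE.Dd F) (t, y)) *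
          ((-(MCE.Dd F (t, y) ^ 2)⁻¹) *
            MCE.dv ((0 : ℝ), (Pi.single i 1 : Fin n → ℝ)) (MCE.Dd F) (t, y))
        + (MCE.Dd F (t, y))⁻¹ * ((-(1 / 2 : ℝ)) *
            MCE.dv ((0 : ℝ), (Pi.single i 1 : Fin n → ℝ))
              (MCE.dv ((1 : ℝ), (0 : Fin n → ℝ)) (MCE.Dd F)) (t, y)) := by
    show fderiv ℝ _ (t, y) _ = _
    rw [hWfd.fderiv]
    simp [MCE.dv]
  have hsymm : MCE.dv ((1 : ℝ), (0 : Fin n → ℝ))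
        (MCE.dv ((0 : ℝ), (Pi.single i 1 : Fin n → ℝ)) (MCE.Dd F)) (t, y)
      = MCE.dv ((0 : ℝ), (Pi.single i 1 : Fin n → ℝ))
          (MCE.dv ((1 : ℝ), (0 : Fin n → ℝ)) (MCE.Dd F)) (t, y) :=
    MCE.dv_symm MCE.usOpen hDd hp _ _
  rw [hLeft, h3.deriv, hRight, hdvW, ← hsymm]
  ring
end
end

section
/- Let F(t,·) be a smooth family of Minkowski norms on ℝ^n satisfying the un-normalized Ricci flow ∂_t g_{ij} = −2Ric_{ij}. Then the raised mean Cartan torsion evolves by ∂_t I^i = 2Ric^{ij}I_j − ρ^i, where ρ := g^{jk}Ric_{jk}, ρ_j := ∂ρ/∂y^j, ρ^i := g^{ij}ρ_j and Ric^{ij} := g^{ik}g^{jl}Ric_{kl}. -/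
open scoped BigOperators

noncomputable section

/-- Directional derivative operator. -/
def Dv {E : Type*} [NormedAddCommGroup E] [NormedSpace ℝ E] (v : E) (f : E → ℝ) : E → ℝ :=
  fun p => fderiv ℝ f p v

section General

variable {E : Type*} [NormedAddCommGroup E] [NormedSpace ℝ E]
variable {U : Set E} {f g : E → ℝ} {p : E} {v w : E}

theorem ContDiffOn.dv (hf : ContDiffOn ℝ (⊤ : ℕ∞) f U) (hU : IsOpen U) (v : E) :
    ContDiffOn ℝ (⊤ : ℕ∞) (Dv v f) U := by
  have h1 : ContDiffOn ℝ (⊤ : ℕ∞) (fderiv ℝ f) U :=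
    hf.fderiv_of_isOpen hU (by exact_mod_cast le_top)
  exact h1.clm_apply contDiffOn_const

theorem Dv.congr_nhds (h : f =ᶠ[nhds p] g) : Dv v f p = Dv v g p := by
  unfold Dv; rw [h.fderiv_eq]

theorem dv_swap (hU : IsOpen U) (hf : ContDiffOn ℝ (⊤ : ℕ∞) f U) (hp : p ∈ U) :
    Dv v (Dv w f) p = Dv w (Dv v f) p := by
  have hUf : U ∈ nhds p := hU.mem_nhds hp
  have hder : ∀ᶠ q in nhds p, HasFDerivAt f (fderiv ℝ f q) q := by
    filter_upwards [hU.mem_nhds hp] with q hq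
    exact ((hf.contDiffAt (hU.mem_nhds hq)).differentiableAt (by simp)).hasFDerivAt
  have h2 : ContDiffAt ℝ (⊤ : ℕ∞) (fderiv ℝ f) p :=
    (hf.fderiv_of_isOpen hU (by exact_mod_cast le_top)).contDiffAt hUf
  have hd2 : HasFDerivAt (fderiv ℝ f) (fderiv ℝ (fderiv ℝ f) p) p :=
    (h2.differentiableAt (by simp)).hasFDerivAt
  have hsym := second_derivative_symmetric_of_eventually hder hd2 v w
  have key : ∀ u u' : E, Dv u (Dv u' f) p = fderiv ℝ (fderiv ℝ f) p u u' := by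
    intro u u'
    have : Dv u' f = fun q => (fderiv ℝ f q) u' := rfl
    unfold Dv
    rw [fderiv_clm_apply (h2.differentiableAt (by simp)) (differentiableAt_const u')]
    simp
  rw [key v w, key w v, hsym]

end General

section MatrixLemmas

variable {E : Type*} [NormedAddCommGroup E] [NormedSpace ℝ E]
variable {U : Set E} {p : E} {m : ℕ}

theorem ContDiffOn.finsetProd {ι : Type*} (s : Finset ι) (f : ι → E → ℝ)
    (h : ∀ i ∈ s, ContDiffOn ℝ (⊤ : ℕ∞) (f i) U) :
    ContDiffOn ℝ (⊤ : ℕ∞) (fun y => ∏ i ∈ s, f i y) U := by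
  classical
  induction s using Finset.induction with
  | empty => simpa using contDiffOn_const
  | insert a s hx ih =>
    next =>
      simp only [Finset.prod_insert hx]
      exact (h a (Finset.mem_insert_self a s)).mul
        (ih fun i hi => h i (Finset.mem_insert_of_mem hi))

theorem contDiffOn_det (M : E → Matrix (Fin m) (Fin m) ℝ)
    (h : ∀ i j, ContDiffOn ℝ (⊤ : ℕ∞) (fun y => M y i j) U) :
    ContDiffOn ℝ (⊤ : ℕ∞) (fun y => (M y).det) U := by
  simp only [Matrix.det_apply]
  apply ContDiffOn.sum
  intro σ _
  have : ∀ (c : ℤ), ContDiffOn ℝ (⊤ : ℕ∞) (fun y => c • ∏ i, M y (σ i) i) U := by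
    intro c
    simp only [zsmul_eq_mul]
    exact contDiffOn_const.mul (ContDiffOn.finsetProd _ _ fun i _ => h (σ i) i)
  exact this _

theorem contDiffOn_invMat (M : E → Matrix (Fin m) (Fin m) ℝ)
    (h : ∀ i j, ContDiffOn ℝ (⊤ : ℕ∞) (fun y => M y i j) U)
    (hdet : ∀ y ∈ U, (M y).det ≠ 0) (i j : Fin m) :
    ContDiffOn ℝ (⊤ : ℕ∞) (fun y => (M y)⁻¹ i j) U := by
  classical
  have hadj : ContDiffOn ℝ (⊤ : ℕ∞) (fun y => (M y).adjugate i j) U := by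
    simp only [Matrix.adjugate_apply]
    apply contDiffOn_det
    intro a b
    simp only [Matrix.updateRow_apply]
    by_cases hab : a = j
    · simp only [hab, if_pos rfl]; exact contDiffOn_const
    · simpa [hab] using h a b
  have : (fun y => (M y)⁻¹ i j) = fun y => ((M y).det)⁻¹ * (M y).adjugate i j := by
    funext y
    rw [Matrix.inv_def]
    simp [Ring.inverse_eq_inv']
  rw [this]
  exact ((contDiffOn_det M h).inv hdet).mul hadj

/-- positive definiteness (in the un-bundled sense) implies nonvanishing determinant. -/
theorem det_ne_zero_of_posdef {A : Matrix (Fin m) (Fin m) ℝ}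
    (h : ∀ v : Fin m → ℝ, v ≠ 0 → 0 < ∑ i, ∑ j, A i j * v i * v j) : A.det ≠ 0 := by
  classical
  intro hdet
  obtain ⟨v, hv, hmv⟩ := (Matrix.exists_mulVec_eq_zero_iff).2 hdet
  have h0 : ∑ i, ∑ j, A i j * v i * v j = 0 := by
    have : ∀ i, (A.mulVec v) i = 0 := fun i => by rw [hmv]; rfl
    calc ∑ i, ∑ j, A i j * v i * v j = ∑ i, (∑ j, A i j * v j) * v i := by
          congr 1; funext i
          rw [Finset.sum_mul]
          congr 1; funext j; ring
      _ = 0 := by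
          refine Finset.sum_eq_zero fun i _ => ?_
          have := this i
          rw [Matrix.mulVec, dotProduct] at this
          rw [this, zero_mul]
  exact absurd h0 (ne_of_gt (h v hv))

end MatrixLemmas

section DvCalc

variable {E : Type*} [NormedAddCommGroup E] [NormedSpace ℝ E]
variable {U : Set E} {p : E} {v : E} {m : ℕ}

theorem dv_sum {ι : Type*} (s : Finset ι) (f : ι → E → ℝ)
    (h : ∀ k ∈ s, DifferentiableAt ℝ (f k) p) :
    Dv v (fun y => ∑ k ∈ s, f k y) p = ∑ k ∈ s, Dv v (f k) p := by
  unfold Dv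
  rw [fderiv_fun_sum h]
  simp

theorem dv_mul {f g : E → ℝ} (hf : DifferentiableAt ℝ f p) (hg : DifferentiableAt ℝ g p) :
    Dv v (fun y => f y * g y) p = Dv v f p * g p + f p * Dv v g p := by
  unfold Dv
  rw [fderiv_fun_mul hf hg]
  simp only [ContinuousLinearMap.add_apply, ContinuousLinearMap.smul_apply, smul_eq_mul]
  ring

theorem dv_const_mul {f : E → ℝ} (hf : DifferentiableAt ℝ f p) (c : ℝ) :
    Dv v (fun y => c * f y) p = c * Dv v f p := by
  unfold Dv
  rw [fderiv_const_mul hf c]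
  simp

theorem dv_const (c : ℝ) : Dv v (fun _ => c) p = 0 := by
  unfold Dv; simp

/-- Differentiability at a point from `ContDiffOn` on an open neighbourhood. -/
theorem ContDiffOn.dAt {f : E → ℝ} (hf : ContDiffOn ℝ (⊤ : ℕ∞) f U) (hU : IsOpen U)
    (hp : p ∈ U) : DifferentiableAt ℝ f p :=
  (hf.contDiffAt (hU.mem_nhds hp)).differentiableAt (by simp)

theorem dv_invMat (M : E → Matrix (Fin m) (Fin m) ℝ) (hU : IsOpen U)
    (h : ∀ i j, ContDiffOn ℝ (⊤ : ℕ∞) (fun y => M y i j) U)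
    (hdet : ∀ y ∈ U, (M y).det ≠ 0) (hp : p ∈ U) (i j : Fin m) :
    Dv v (fun y => (M y)⁻¹ i j) p =
      -∑ k, ∑ l, (M p)⁻¹ i k * Dv v (fun y => M y k l) p * (M p)⁻¹ l j := by
  classical
  set A := M p with hA
  set Ainv := (M p)⁻¹ with hAinv
  set B : Matrix (Fin m) (Fin m) ℝ := Matrix.of fun i j => Dv v (fun y => (M y)⁻¹ i j) p with hB
  set A' : Matrix (Fin m) (Fin m) ℝ := Matrix.of fun i j => Dv v (fun y => M y i j) p with hA'
  have hAunit : IsUnit A.det := isUnit_iff_ne_zero.2 (hdet p hp)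
  have hdiffInv : ∀ a b : Fin m, DifferentiableAt ℝ (fun y => (M y)⁻¹ a b) p :=
    fun a b => (contDiffOn_invMat M h hdet a b).dAt hU hp
  have hdiffM : ∀ a b : Fin m, DifferentiableAt ℝ (fun y => M y a b) p :=
    fun a b => (h a b).dAt hU hp
  -- differentiate the identity Minv * M = 1 entrywise
  have key : ∀ a b : Fin m, (B * A + Ainv * A') a b = 0 := by
    intro a b
    have hident : (fun y => ∑ k, (M y)⁻¹ a k * M y k b) =ᶠ[nhds p]
        (fun _ => (1 : Matrix (Fin m) (Fin m) ℝ) a b) := by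
      filter_upwards [hU.mem_nhds hp] with q hq
      have : (M q)⁻¹ * M q = 1 := Matrix.nonsing_inv_mul _ (isUnit_iff_ne_zero.2 (hdet q hq))
      calc ∑ k, (M q)⁻¹ a k * M q k b = ((M q)⁻¹ * M q) a b := (Matrix.mul_apply).symm
        _ = (1 : Matrix (Fin m) (Fin m) ℝ) a b := by rw [this]
    have h0 : Dv v (fun y => ∑ k, (M y)⁻¹ a k * M y k b) p = 0 := by
      rw [Dv.congr_nhds hident, dv_const]
    rw [dv_sum _ _ (fun k _ => ((hdiffInv a k).fun_mul (hdiffM k b)))] at h0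
    have hexp : ∀ k, Dv v (fun y => (M y)⁻¹ a k * M y k b) p
        = B a k * A k b + Ainv a k * A' k b := fun k => dv_mul (hdiffInv a k) (hdiffM k b)
    simp only [hexp] at h0
    rw [Finset.sum_add_distrib] at h0
    simpa [Matrix.add_apply, Matrix.mul_apply] using h0
  have hBA : B * A = -(Ainv * A') := by
    have : B * A + Ainv * A' = 0 := by
      ext a b; exact key a b
    exact eq_neg_of_add_eq_zero_left this
  have hBfin : B = -(Ainv * A' * Ainv) := by
    calc B = B * A * A⁻¹ := (Matrix.mul_nonsing_inv_cancel_right A B hAunit).symm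
      _ = -(Ainv * A') * A⁻¹ := by rw [hBA]
      _ = -(Ainv * A' * Ainv) := by rw [Matrix.neg_mul, ← hAinv, Matrix.mul_assoc]
  have heq : B i j = (-(Ainv * A' * Ainv)) i j := by rw [hBfin]
  rw [show Dv v (fun y => (M y)⁻¹ i j) p = B i j from rfl, heq]
  simp only [Matrix.neg_apply, Matrix.mul_apply, neg_inj]
  rw [Finset.sum_comm]
  congr 1; funext l
  rw [Finset.sum_mul]
  rfl

end DvCalc



section Slice

variable {n : ℕ}

/-- Spatial direction in the joint space. -/
def sp (n : ℕ) (i : Fin n) : ℝ × (Fin n → ℝ) := ((0 : ℝ), Pi.single i 1)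

/-- Time direction in the joint space. -/
def td (n : ℕ) : ℝ × (Fin n → ℝ) := ((1 : ℝ), (0 : Fin n → ℝ))

theorem slice_pd {h : (ℝ × (Fin n → ℝ)) → ℝ} {t : ℝ} {y : Fin n → ℝ}
    (hd : DifferentiableAt ℝ h (t, y)) (i : Fin n) :
    pd i (fun z => h (t, z)) y = Dv (sp n i) h (t, y) := by
  have hemb : HasFDerivAt (fun z : Fin n → ℝ => (t, z))
      (ContinuousLinearMap.inr ℝ ℝ (Fin n → ℝ)) y := hasFDerivAt_prodMk_right t y
  have hcomp := (hd.hasFDerivAt.comp y hemb)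
  unfold pd Dv
  rw [show (fun z => h (t, z)) = h ∘ Prod.mk t from rfl, hcomp.fderiv]
  rfl

theorem slice_deriv {h : (ℝ × (Fin n → ℝ)) → ℝ} {t : ℝ} {y : Fin n → ℝ}
    (hd : DifferentiableAt ℝ h (t, y)) :
    HasDerivAt (fun s => h (s, y)) (Dv (td n) h (t, y)) t := by
  have hemb : HasFDerivAt (fun s : ℝ => (s, y))
      (ContinuousLinearMap.inl ℝ ℝ (Fin n → ℝ)) t := hasFDerivAt_prodMk_left t y
  have hemb' : HasDerivAt (fun s : ℝ => (s, y)) ((1 : ℝ), (0 : Fin n → ℝ)) t := by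
    simpa using hemb.hasDerivAt
  exact hd.hasFDerivAt.comp_hasDerivAt t hemb'

/-- Iterated slicing: eventual version.  If `f` agrees with the `t`-slice of `h` near `y`,
then `pd i f` agrees with the `t`-slice of `Dv (sp n i) h` near `y`. -/
theorem pd_slice_ev {U : Set (ℝ × (Fin n → ℝ))} (hU : IsOpen U)
    {h : (ℝ × (Fin n → ℝ)) → ℝ} (hh : ContDiffOn ℝ (⊤ : ℕ∞) h U)
    {t : ℝ} {y : Fin n → ℝ} (hp : (t, y) ∈ U)
    {f : (Fin n → ℝ) → ℝ} (hf : ∀ᶠ z in nhds y, f z = h (t, z)) (i : Fin n) :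
    ∀ᶠ z in nhds y, pd i f z = Dv (sp n i) h (t, z) := by
  have hUy : ∀ᶠ z in nhds y, (t, z) ∈ U := by
    have : ContinuousAt (fun z : Fin n → ℝ => (t, z)) y :=
      (continuous_const.prodMk continuous_id).continuousAt
    exact this (hU.mem_nhds hp)
  filter_upwards [hf.eventually_nhds, hUy] with z hz hzU
  have h1 : pd i f z = pd i (fun z' => h (t, z')) z := by
    unfold pd
    rw [Filter.EventuallyEq.fderiv_eq hz]
  rw [h1, slice_pd (hh.dAt hU hzU) i]

theorem pd_slice_at {U : Set (ℝ × (Fin n → ℝ))} (hU : IsOpen U)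
    {h : (ℝ × (Fin n → ℝ)) → ℝ} (hh : ContDiffOn ℝ (⊤ : ℕ∞) h U)
    {t : ℝ} {y : Fin n → ℝ} (hp : (t, y) ∈ U)
    {f : (Fin n → ℝ) → ℝ} (hf : ∀ᶠ z in nhds y, f z = h (t, z)) (i : Fin n) :
    pd i f y = Dv (sp n i) h (t, y) :=
  (pd_slice_ev hU hh hp hf i).self_of_nhds

theorem deriv_slice_at {U : Set (ℝ × (Fin n → ℝ))} (hU : IsOpen U)
    {h : (ℝ × (Fin n → ℝ)) → ℝ} (hh : ContDiffOn ℝ (⊤ : ℕ∞) h U)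
    {t : ℝ} {y : Fin n → ℝ} (hp : (t, y) ∈ U)
    {φ : ℝ → ℝ} (hφ : ∀ᶠ s in nhds t, φ s = h (s, y)) :
    deriv φ t = Dv (td n) h (t, y) := by
  have : deriv φ t = deriv (fun s => h (s, y)) t := Filter.EventuallyEq.deriv_eq hφ
  rw [this, (slice_deriv (hh.dAt hU hp)).deriv]

end Slice


section Joint

variable {n : ℕ}

/-- Joint fundamental tensor. -/
def Gj (Phi : (ℝ × (Fin n → ℝ)) → ℝ) (i j : Fin n) : (ℝ × (Fin n → ℝ)) → ℝ :=
  fun p => (1 / 2 : ℝ) * Dv (sp n i) (Dv (sp n j) (fun q => Phi q ^ 2)) p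

def GMatJ (Phi : (ℝ × (Fin n → ℝ)) → ℝ) (p : ℝ × (Fin n → ℝ)) : Matrix (Fin n) (Fin n) ℝ :=
  Matrix.of fun i j => Gj Phi i j p

def GinvJ (Phi : (ℝ × (Fin n → ℝ)) → ℝ) (i j : Fin n) : (ℝ × (Fin n → ℝ)) → ℝ :=
  fun p => (GMatJ Phi p)⁻¹ i j

def Cj (Phi : (ℝ × (Fin n → ℝ)) → ℝ) (i j k : Fin n) : (ℝ × (Fin n → ℝ)) → ℝ :=
  fun p => (1 / 2 : ℝ) * Dv (sp n i) (Gj Phi j k) p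

def RicJ (Psi : (ℝ × (Fin n → ℝ)) → ℝ) (i j : Fin n) : (ℝ × (Fin n → ℝ)) → ℝ :=
  fun p => (1 / 2 : ℝ) * Dv (sp n i) (Dv (sp n j) Psi) p

def IJ (Phi : (ℝ × (Fin n → ℝ)) → ℝ) (i : Fin n) : (ℝ × (Fin n → ℝ)) → ℝ :=
  fun p => ∑ j, ∑ k, GinvJ Phi j k p * Cj Phi i j k p

def IUpJ (Phi : (ℝ × (Fin n → ℝ)) → ℝ) (i : Fin n) : (ℝ × (Fin n → ℝ)) → ℝ :=
  fun p => ∑ j, GinvJ Phi i j p * IJ Phi j p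

def rhoJ (Phi Psi : (ℝ × (Fin n → ℝ)) → ℝ) : (ℝ × (Fin n → ℝ)) → ℝ :=
  fun p => ∑ j, ∑ k, GinvJ Phi j k p * RicJ Psi j k p

variable {U : Set (ℝ × (Fin n → ℝ))} {Phi Psi : (ℝ × (Fin n → ℝ)) → ℝ}

theorem Gj_smooth (hU : IsOpen U) (hPhi : ContDiffOn ℝ (⊤ : ℕ∞) Phi U) (i j : Fin n) :
    ContDiffOn ℝ (⊤ : ℕ∞) (Gj Phi i j) U :=
  contDiffOn_const.mul (((hPhi.pow 2).dv hU (sp n j)).dv hU (sp n i))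

theorem Cj_smooth (hU : IsOpen U) (hPhi : ContDiffOn ℝ (⊤ : ℕ∞) Phi U) (i j k : Fin n) :
    ContDiffOn ℝ (⊤ : ℕ∞) (Cj Phi i j k) U :=
  contDiffOn_const.mul ((Gj_smooth hU hPhi j k).dv hU (sp n i))

theorem RicJ_smooth (hU : IsOpen U) (hPsi : ContDiffOn ℝ (⊤ : ℕ∞) Psi U) (i j : Fin n) :
    ContDiffOn ℝ (⊤ : ℕ∞) (RicJ Psi i j) U :=
  contDiffOn_const.mul ((hPsi.dv hU (sp n j)).dv hU (sp n i))

theorem GinvJ_smooth (hU : IsOpen U) (hPhi : ContDiffOn ℝ (⊤ : ℕ∞) Phi U)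
    (hdet : ∀ p ∈ U, (GMatJ Phi p).det ≠ 0) (i j : Fin n) :
    ContDiffOn ℝ (⊤ : ℕ∞) (GinvJ Phi i j) U :=
  contDiffOn_invMat (GMatJ Phi) (fun a b => Gj_smooth hU hPhi a b) hdet i j

theorem IJ_smooth (hU : IsOpen U) (hPhi : ContDiffOn ℝ (⊤ : ℕ∞) Phi U)
    (hdet : ∀ p ∈ U, (GMatJ Phi p).det ≠ 0) (i : Fin n) :
    ContDiffOn ℝ (⊤ : ℕ∞) (IJ Phi i) U := by
  apply ContDiffOn.sum; intro j _; apply ContDiffOn.sum; intro k _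
  exact (GinvJ_smooth hU hPhi hdet j k).mul (Cj_smooth hU hPhi i j k)

theorem rhoJ_smooth (hU : IsOpen U) (hPhi : ContDiffOn ℝ (⊤ : ℕ∞) Phi U)
    (hPsi : ContDiffOn ℝ (⊤ : ℕ∞) Psi U)
    (hdet : ∀ p ∈ U, (GMatJ Phi p).det ≠ 0) :
    ContDiffOn ℝ (⊤ : ℕ∞) (rhoJ Phi Psi) U := by
  apply ContDiffOn.sum; intro j _; apply ContDiffOn.sum; intro k _
  exact (GinvJ_smooth hU hPhi hdet j k).mul (RicJ_smooth hU hPsi j k)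

/-- Symmetry of the joint fundamental tensor. -/
theorem Gj_symm (hU : IsOpen U) (hPhi : ContDiffOn ℝ (⊤ : ℕ∞) Phi U) {p : ℝ × (Fin n → ℝ)}
    (hp : p ∈ U) (i j : Fin n) : Gj Phi i j p = Gj Phi j i p := by
  unfold Gj
  rw [dv_swap hU (hPhi.pow 2) hp]

/-- Symmetry of the inverse of the joint fundamental tensor. -/
theorem GinvJ_symm (hU : IsOpen U) (hPhi : ContDiffOn ℝ (⊤ : ℕ∞) Phi U) {p : ℝ × (Fin n → ℝ)}
    (hp : p ∈ U) (i j : Fin n) : GinvJ Phi i j p = GinvJ Phi j i p := by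
  have hsym : (GMatJ Phi p).transpose = GMatJ Phi p := by
    ext a b
    exact Gj_symm hU hPhi hp b a
  have : ((GMatJ Phi p)⁻¹).transpose = (GMatJ Phi p)⁻¹ := by
    rw [Matrix.transpose_nonsing_inv, hsym]
  unfold GinvJ
  conv_lhs => rw [← this]
  rfl

end Joint


section Algebra

theorem sum4_comm {n : ℕ} (F : Fin n → Fin n → Fin n → Fin n → ℝ) :
    ∑ a, ∑ b, ∑ c, ∑ d, F a b c d = ∑ c, ∑ d, ∑ a, ∑ b, F a b c d := by
  calc ∑ a, ∑ b, ∑ c, ∑ d, F a b c d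
      = ∑ a, ∑ c, ∑ b, ∑ d, F a b c d :=
        Finset.sum_congr rfl fun a _ => Finset.sum_comm
    _ = ∑ c, ∑ a, ∑ b, ∑ d, F a b c d := Finset.sum_comm
    _ = ∑ c, ∑ a, ∑ d, ∑ b, F a b c d :=
        Finset.sum_congr rfl fun c _ => Finset.sum_congr rfl fun a _ => Finset.sum_comm
    _ = ∑ c, ∑ d, ∑ a, ∑ b, F a b c d :=
        Finset.sum_congr rfl fun c _ => Finset.sum_comm

theorem key_algebra {n : ℕ} (g Ric : Fin n → Fin n → ℝ) (C DR : Fin n → Fin n → Fin n → ℝ)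
    (Iv : Fin n → ℝ) (hg : ∀ a b, g a b = g b a) (i : Fin n) :
    ∑ j, ((-∑ k, ∑ l, g i k * (-2 * Ric k l) * g l j) * Iv j
        + g i j * (∑ k, ∑ l, ((-∑ m, ∑ q, g k m * (-2 * Ric m q) * g q l) * C j k l
            + g k l * (-(DR j k l)))))
    = 2 * (∑ j, (∑ k, ∑ l, g i k * g j l * Ric k l) * Iv j)
      - ∑ j, g i j * (∑ k, ∑ l, ((-∑ m, ∑ q, g k m * (2 * C j m q) * g q l) * Ric k l
            + g k l * DR j k l)) := by
  rw [Finset.mul_sum, ← Finset.sum_sub_distrib]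
  refine Finset.sum_congr rfl fun j _ => ?_
  have hfirst : (-∑ k, ∑ l, g i k * (-2 * Ric k l) * g l j)
      = 2 * (∑ k, ∑ l, g i k * g j l * Ric k l) := by
    rw [Finset.mul_sum, ← Finset.sum_neg_distrib]
    refine Finset.sum_congr rfl fun k _ => ?_
    rw [Finset.mul_sum, ← Finset.sum_neg_distrib]
    refine Finset.sum_congr rfl fun l _ => ?_
    rw [hg l j]; ring
  have hT : (∑ k, ∑ l, ∑ m, ∑ q, 2 * (g k m * Ric m q * g q l) * C j k l)
      = ∑ k, ∑ l, ∑ m, ∑ q, 2 * (g k m * C j m q * g q l) * Ric k l := by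
    rw [sum4_comm (fun a b c d => 2 * (g a c * C j c d * g d b) * Ric a b)]
    refine Finset.sum_congr rfl fun k _ => Finset.sum_congr rfl fun l _ =>
      Finset.sum_congr rfl fun m _ => Finset.sum_congr rfl fun q _ => ?_
    rw [hg m k, hg l q]; ring
  have hS : (∑ k, ∑ l, ((-∑ m, ∑ q, g k m * (-2 * Ric m q) * g q l) * C j k l
        + g k l * (-(DR j k l))))
      = -(∑ k, ∑ l, ((-∑ m, ∑ q, g k m * (2 * C j m q) * g q l) * Ric k l
        + g k l * DR j k l)) := by
    have h1 : (∑ k, ∑ l, ((-∑ m, ∑ q, g k m * (-2 * Ric m q) * g q l) * C j k l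
          + g k l * (-(DR j k l))))
        = (∑ k, ∑ l, ∑ m, ∑ q, 2 * (g k m * Ric m q * g q l) * C j k l)
          - ∑ k, ∑ l, g k l * DR j k l := by
      rw [← Finset.sum_sub_distrib]
      refine Finset.sum_congr rfl fun k _ => ?_
      rw [← Finset.sum_sub_distrib]
      refine Finset.sum_congr rfl fun l _ => ?_
      have e1 : (-∑ m, ∑ q, g k m * (-2 * Ric m q) * g q l)
          = ∑ m, ∑ q, 2 * (g k m * Ric m q * g q l) := by
        rw [← Finset.sum_neg_distrib]
        refine Finset.sum_congr rfl fun m _ => ?_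
        rw [← Finset.sum_neg_distrib]
        exact Finset.sum_congr rfl fun q _ => by ring
      rw [e1, Finset.sum_mul]
      have : ∀ m : Fin n, (∑ q, 2 * (g k m * Ric m q * g q l)) * C j k l
          = ∑ q, 2 * (g k m * Ric m q * g q l) * C j k l := fun m => Finset.sum_mul _ _ _
      simp only [this]
      ring
    have h2 : (∑ k, ∑ l, ((-∑ m, ∑ q, g k m * (2 * C j m q) * g q l) * Ric k l
          + g k l * DR j k l))
        = -(∑ k, ∑ l, ∑ m, ∑ q, 2 * (g k m * C j m q * g q l) * Ric k l)
          + ∑ k, ∑ l, g k l * DR j k l := by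
      rw [← Finset.sum_neg_distrib, ← Finset.sum_add_distrib]
      refine Finset.sum_congr rfl fun k _ => ?_
      rw [← Finset.sum_neg_distrib, ← Finset.sum_add_distrib]
      refine Finset.sum_congr rfl fun l _ => ?_
      have e2 : (-∑ m, ∑ q, g k m * (2 * C j m q) * g q l)
          = -(∑ m, ∑ q, 2 * (g k m * C j m q * g q l)) := by
        congr 1
        exact Finset.sum_congr rfl fun m _ => Finset.sum_congr rfl fun q _ => by ring
      rw [e2, neg_mul, Finset.sum_mul]
      have heq : ∀ m : Fin n, (∑ q, 2 * (g k m * C j m q * g q l)) * Ric k l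
          = ∑ q, 2 * (g k m * C j m q * g q l) * Ric k l := fun m => Finset.sum_mul _ _ _
      simp only [heq]
    rw [h1, h2, hT]
    ring
  linear_combination (Iv j) * hfirst + hS * (g i j)
  
end Algebra





theorem raised_mean_cartan_evolution
    {n : ℕ} (a b : ℝ) (F R : ℝ → (Fin n → ℝ) → ℝ)
    (hF : SmoothFamily (Set.Ioo a b) F)
    (hMink : ∀ t ∈ Set.Ioo a b, IsMinkowski (F t))
    (hR : SmoothFamily (Set.Ioo a b) R)
    (hRhom : ∀ t ∈ Set.Ioo a b, ∀ y : Fin n → ℝ, y ≠ 0 →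
      ∀ lam : ℝ, 0 < lam → R t (lam • y) = R t y)
    (hflow : ∀ t ∈ Set.Ioo a b, ∀ y : Fin n → ℝ, y ≠ 0 → ∀ i j : Fin n,
      deriv (fun s => gT (F s) i j y) t = -2 * RicT (F t) (R t) i j y)
    :
    ∀ t ∈ Set.Ioo a b, ∀ y : Fin n → ℝ, y ≠ 0 → ∀ i : Fin n,
      deriv (fun s => mCUp (F s) i y) t =
        2 * (∑ j, RicUp (F t) (R t) i j y * mC (F t) j y) - rhoUp (F t) (R t) i y := by
  classical
  intro t ht y hy i
  -- the joint domain
  set U : Set (ℝ × (Fin n → ℝ)) := (Set.Ioo a b) ×ˢ {z : Fin n → ℝ | z ≠ 0} with hUdef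
  have hU : IsOpen U := isOpen_Ioo.prod (isOpen_compl_singleton (x := (0 : Fin n → ℝ)))
  have hmemU : ∀ (s : ℝ) (z : Fin n → ℝ), s ∈ Set.Ioo a b → z ≠ 0 → (s, z) ∈ U := by
    intro s z hs hz
    exact Set.mem_prod.2 ⟨hs, hz⟩
  set Phi : (ℝ × (Fin n → ℝ)) → ℝ := fun p => F p.1 p.2 with hPhidef
  set Psi : (ℝ × (Fin n → ℝ)) → ℝ := fun p => R p.1 p.2 * F p.1 p.2 ^ 2 with hPsidef
  have hPhi : ContDiffOn ℝ (⊤ : ℕ∞) Phi U := hF.of_le (by simp)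
  have hPhi2 : ContDiffOn ℝ (⊤ : ℕ∞) (fun q => Phi q ^ 2) U := hPhi.pow 2
  have hPsi : ContDiffOn ℝ (⊤ : ℕ∞) Psi U := (hR.of_le (by simp)).mul hPhi2
  have hp0 : (t, y) ∈ U := hmemU t y ht hy
  -- basic eventual facts
  have hyEv : ∀ (z : Fin n → ℝ), z ≠ 0 → ∀ᶠ z' in nhds z, z' ≠ 0 := by
    intro z hz
    exact Filter.eventually_of_mem
      ((isOpen_compl_singleton (x := (0 : Fin n → ℝ))).mem_nhds hz) (fun _ h => h)
  have htEv : ∀ (s : ℝ), s ∈ Set.Ioo a b → ∀ᶠ s' in nhds s, s' ∈ Set.Ioo a b := by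
    intro s hs
    exact Filter.eventually_of_mem (isOpen_Ioo.mem_nhds hs) (fun _ h => h)
  -- translation: fundamental tensor
  have Tg : ∀ (s : ℝ) (z : Fin n → ℝ), (s, z) ∈ U → ∀ i' j' : Fin n,
      gT (F s) i' j' z = Gj Phi i' j' (s, z) := by
    intro s z hsz i' j'
    have hf : ∀ᶠ z' in nhds z, (fun w => F s w ^ 2) z' = (fun q => Phi q ^ 2) (s, z') :=
      Filter.Eventually.of_forall (fun _ => rfl)
    have ev1 := pd_slice_ev hU hPhi2 hsz hf j'
    have h2 := pd_slice_at hU (hPhi2.dv hU (sp n j')) hsz ev1 i'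
    show (1 / 2 : ℝ) * pd i' (pd j' (fun w => F s w ^ 2)) z = _
    rw [h2]
    rfl
  -- translation : cartan tensor
  have TC : ∀ (s : ℝ) (z : Fin n → ℝ), (s, z) ∈ U → ∀ i' j' k' : Fin n,
      cartanT (F s) i' j' k' z = Cj Phi i' j' k' (s, z) := by
    intro s z hsz i' j' k'
    have hf : ∀ᶠ z' in nhds z, (fun w => F s w ^ 2) z' = (fun q => Phi q ^ 2) (s, z') :=
      Filter.Eventually.of_forall (fun _ => rfl)
    have ev1 := pd_slice_ev hU hPhi2 hsz hf k'
    have ev2 := pd_slice_ev hU (hPhi2.dv hU (sp n k')) hsz ev1 j'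
    have h3 := pd_slice_at hU ((hPhi2.dv hU (sp n k')).dv hU (sp n j')) hsz ev2 i'
    show (1 / 4 : ℝ) * pd i' (pd j' (pd k' (fun w => F s w ^ 2))) z = _
    rw [h3]
    show (1 / 4 : ℝ) * Dv (sp n i') (Dv (sp n j') (Dv (sp n k') fun q => Phi q ^ 2)) (s, z)
      = (1 / 2 : ℝ) * Dv (sp n i') (Gj Phi j' k') (s, z)
    have hGj : Gj Phi j' k' = fun p =>
        (1 / 2 : ℝ) * Dv (sp n j') (Dv (sp n k') fun q => Phi q ^ 2) p := rfl
    have hdiff : DifferentiableAt ℝ (Dv (sp n j') (Dv (sp n k') fun q => Phi q ^ 2)) (s, z) :=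
      ((hPhi2.dv hU (sp n k')).dv hU (sp n j')).dAt hU hsz
    rw [hGj, dv_const_mul hdiff]
    ring
  -- translation : Ricci tensor
  have TRic : ∀ (s : ℝ) (z : Fin n → ℝ), (s, z) ∈ U → ∀ i' j' : Fin n,
      RicT (F s) (R s) i' j' z = RicJ Psi i' j' (s, z) := by
    intro s z hsz i' j'
    have hf : ∀ᶠ z' in nhds z, (fun w => R s w * F s w ^ 2) z' = Psi (s, z') :=
      Filter.Eventually.of_forall (fun _ => rfl)
    have ev1 := pd_slice_ev hU hPsi hsz hf j'
    have h2 := pd_slice_at hU (hPsi.dv hU (sp n j')) hsz ev1 i'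
    show (1 / 2 : ℝ) * pd i' (pd j' (fun w => R s w * F s w ^ 2)) z = _
    rw [h2]
    rfl
  -- translation : matrices and inverses
  have TgM : ∀ (s : ℝ) (z : Fin n → ℝ), (s, z) ∈ U → gMat (F s) z = GMatJ Phi (s, z) := by
    intro s z hsz
    ext i' j'
    exact Tg s z hsz i' j'
  have Tginv : ∀ (s : ℝ) (z : Fin n → ℝ), (s, z) ∈ U → ∀ i' j' : Fin n,
      gInv (F s) i' j' z = GinvJ Phi i' j' (s, z) := by
    intro s z hsz i' j'
    show (gMat (F s) z)⁻¹ i' j' = (GMatJ Phi (s, z))⁻¹ i' j'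
    rw [TgM s z hsz]
  -- nonvanishing determinant
  have hdet : ∀ p ∈ U, (GMatJ Phi p).det ≠ 0 := by
    rintro ⟨s, z⟩ hsz
    have hs : s ∈ Set.Ioo a b := (Set.mem_prod.1 hsz).1
    have hz : z ≠ 0 := (Set.mem_prod.1 hsz).2
    rw [← TgM s z hsz]
    apply det_ne_zero_of_posdef
    intro v hv
    exact (hMink s hs).2.2.2 z hz v hv
  -- translation : mean Cartan torsion and friends
  have TmC : ∀ (s : ℝ) (z : Fin n → ℝ), (s, z) ∈ U → ∀ i' : Fin n,
      mC (F s) i' z = IJ Phi i' (s, z) := by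
    intro s z hsz i'
    refine Finset.sum_congr rfl fun j' _ => Finset.sum_congr rfl fun k' _ => ?_
    rw [Tginv s z hsz, TC s z hsz]
  have TmCUp : ∀ (s : ℝ) (z : Fin n → ℝ), (s, z) ∈ U → ∀ i' : Fin n,
      mCUp (F s) i' z = IUpJ Phi i' (s, z) := by
    intro s z hsz i'
    refine Finset.sum_congr rfl fun j' _ => ?_
    rw [Tginv s z hsz, TmC s z hsz]
  have Trho : ∀ (s : ℝ) (z : Fin n → ℝ), (s, z) ∈ U →
      rho (F s) (R s) z = rhoJ Phi Psi (s, z) := by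
    intro s z hsz
    refine Finset.sum_congr rfl fun j' _ => Finset.sum_congr rfl fun k' _ => ?_
    rw [Tginv s z hsz, TRic s z hsz]
  -- the flow equation, in joint form
  have hflowJ : ∀ p ∈ U, ∀ i' j' : Fin n,
      Dv (td n) (Gj Phi i' j') p = -2 * RicJ Psi i' j' p := by
    rintro ⟨s, z⟩ hsz i' j'
    have hs : s ∈ Set.Ioo a b := (Set.mem_prod.1 hsz).1
    have hz : z ≠ 0 := (Set.mem_prod.1 hsz).2
    have hφ : ∀ᶠ s' in nhds s, gT (F s') i' j' z = Gj Phi i' j' (s', z) := by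
      filter_upwards [htEv s hs] with s' hs'
      exact Tg s' z (hmemU s' z hs' hz) i' j'
    have h1 := deriv_slice_at hU (Gj_smooth hU hPhi i' j') hsz hφ
    rw [← h1, hflow s hs z hz i' j', TRic s z hsz]
  -- differentiability bookkeeping at (t, y)
  have hGjsm : ∀ i' j' : Fin n, ContDiffOn ℝ (⊤ : ℕ∞) (Gj Phi i' j') U :=
    fun i' j' => Gj_smooth hU hPhi i' j'
  have dGinv : ∀ i' j' : Fin n, DifferentiableAt ℝ (GinvJ Phi i' j') (t, y) :=
    fun i' j' => (GinvJ_smooth hU hPhi hdet i' j').dAt hU hp0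
  have dCj : ∀ i' j' k' : Fin n, DifferentiableAt ℝ (Cj Phi i' j' k') (t, y) :=
    fun i' j' k' => (Cj_smooth hU hPhi i' j' k').dAt hU hp0
  have dRicJ : ∀ i' j' : Fin n, DifferentiableAt ℝ (RicJ Psi i' j') (t, y) :=
    fun i' j' => (RicJ_smooth hU hPsi i' j').dAt hU hp0
  have dIJ : ∀ i' : Fin n, DifferentiableAt ℝ (IJ Phi i') (t, y) :=
    fun i' => (IJ_smooth hU hPhi hdet i').dAt hU hp0
  -- derivative of the inverse metric, any direction
  have Dinv : ∀ (v : ℝ × (Fin n → ℝ)) (a b' : Fin n),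
      Dv v (GinvJ Phi a b') (t, y)
        = -∑ k, ∑ l, GinvJ Phi a k (t, y) * Dv v (Gj Phi k l) (t, y) * GinvJ Phi l b' (t, y) := by
    intro v a b'
    exact dv_invMat (GMatJ Phi) hU (fun i' j' => hGjsm i' j') hdet hp0 a b'
  have DtGinv : ∀ a b' : Fin n, Dv (td n) (GinvJ Phi a b') (t, y)
      = -∑ k, ∑ l, GinvJ Phi a k (t, y) * (-2 * RicJ Psi k l (t, y)) * GinvJ Phi l b' (t, y) := by
    intro a b'
    rw [Dinv (td n) a b']
    congr 1
    refine Finset.sum_congr rfl fun k _ => Finset.sum_congr rfl fun l _ => ?_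
    rw [hflowJ (t, y) hp0 k l]
  have DspGj : ∀ j' m q : Fin n, Dv (sp n j') (Gj Phi m q) (t, y)
      = 2 * Cj Phi j' m q (t, y) := by
    intro j' m q
    show _ = 2 * ((1 / 2 : ℝ) * Dv (sp n j') (Gj Phi m q) (t, y))
    ring
  have DspGinv : ∀ j' k l : Fin n, Dv (sp n j') (GinvJ Phi k l) (t, y)
      = -∑ m, ∑ q, GinvJ Phi k m (t, y) * (2 * Cj Phi j' m q (t, y)) * GinvJ Phi q l (t, y) := by
    intro j' k l
    rw [Dinv (sp n j') k l]
    congr 1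
    refine Finset.sum_congr rfl fun m _ => Finset.sum_congr rfl fun q _ => ?_
    rw [DspGj j' m q]
  have DtCj : ∀ j' k l : Fin n, Dv (td n) (Cj Phi j' k l) (t, y)
      = -(Dv (sp n j') (RicJ Psi k l) (t, y)) := by
    intro j' k l
    have hdiffDG : DifferentiableAt ℝ (Dv (sp n j') (Gj Phi k l)) (t, y) :=
      ((hGjsm k l).dv hU (sp n j')).dAt hU hp0
    show Dv (td n) (fun p => (1 / 2 : ℝ) * Dv (sp n j') (Gj Phi k l) p) (t, y) = _
    rw [dv_const_mul hdiffDG]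
    rw [dv_swap hU (hGjsm k l) hp0]
    have hEv : Dv (td n) (Gj Phi k l) =ᶠ[nhds (t, y)] (fun p => -2 * RicJ Psi k l p) := by
      filter_upwards [hU.mem_nhds hp0] with p hp
      exact hflowJ p hp k l
    rw [Dv.congr_nhds hEv, dv_const_mul (dRicJ k l) (-2)]
    ring
  have DtIJ : ∀ j' : Fin n, Dv (td n) (IJ Phi j') (t, y)
      = ∑ k, ∑ l, (Dv (td n) (GinvJ Phi k l) (t, y) * Cj Phi j' k l (t, y)
          + GinvJ Phi k l (t, y) * Dv (td n) (Cj Phi j' k l) (t, y)) := by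
    intro j'
    show Dv (td n) (fun p => ∑ k, ∑ l, GinvJ Phi k l p * Cj Phi j' k l p) (t, y) = _
    rw [dv_sum Finset.univ (fun k => fun p => ∑ l, GinvJ Phi k l p * Cj Phi j' k l p)
      (fun k _ => DifferentiableAt.fun_sum fun l _ => (dGinv k l).mul (dCj j' k l))]
    refine Finset.sum_congr rfl fun k _ => ?_
    rw [dv_sum Finset.univ (fun l => fun p => GinvJ Phi k l p * Cj Phi j' k l p)
      (fun l _ => (dGinv k l).mul (dCj j' k l))]
    refine Finset.sum_congr rfl fun l _ => ?_
    exact dv_mul (dGinv k l) (dCj j' k l)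
  have DspRho : ∀ j' : Fin n, Dv (sp n j') (rhoJ Phi Psi) (t, y)
      = ∑ k, ∑ l, (Dv (sp n j') (GinvJ Phi k l) (t, y) * RicJ Psi k l (t, y)
          + GinvJ Phi k l (t, y) * Dv (sp n j') (RicJ Psi k l) (t, y)) := by
    intro j'
    show Dv (sp n j') (fun p => ∑ k, ∑ l, GinvJ Phi k l p * RicJ Psi k l p) (t, y) = _
    rw [dv_sum Finset.univ (fun k => fun p => ∑ l, GinvJ Phi k l p * RicJ Psi k l p)
      (fun k _ => DifferentiableAt.fun_sum fun l _ => (dGinv k l).mul (dRicJ k l))]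
    refine Finset.sum_congr rfl fun k _ => ?_
    rw [dv_sum Finset.univ (fun l => fun p => GinvJ Phi k l p * RicJ Psi k l p)
      (fun l _ => (dGinv k l).mul (dRicJ k l))]
    refine Finset.sum_congr rfl fun l _ => ?_
    exact dv_mul (dGinv k l) (dRicJ k l)
  -- the left-hand side
  have hL1 : deriv (fun s => mCUp (F s) i y) t = Dv (td n) (IUpJ Phi i) (t, y) := by
    apply deriv_slice_at hU ?_ hp0
    · filter_upwards [htEv t ht] with s' hs'
      exact TmCUp s' y (hmemU s' y hs' hy) i
    · apply ContDiffOn.sum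
      intro j' _
      exact (GinvJ_smooth hU hPhi hdet i j').mul (IJ_smooth hU hPhi hdet j')
  have hL2 : Dv (td n) (IUpJ Phi i) (t, y)
      = ∑ j, (Dv (td n) (GinvJ Phi i j) (t, y) * IJ Phi j (t, y)
          + GinvJ Phi i j (t, y) * Dv (td n) (IJ Phi j) (t, y)) := by
    show Dv (td n) (fun p => ∑ j, GinvJ Phi i j p * IJ Phi j p) (t, y) = _
    rw [dv_sum Finset.univ (fun j => fun p => GinvJ Phi i j p * IJ Phi j p)
      (fun j _ => (dGinv i j).mul (dIJ j))]
    refine Finset.sum_congr rfl fun j _ => ?_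
    exact dv_mul (dGinv i j) (dIJ j)
  -- translate the right-hand side pieces
  have TRicUp : ∀ i' j' : Fin n, RicUp (F t) (R t) i' j' y
      = ∑ k, ∑ l, GinvJ Phi i' k (t, y) * GinvJ Phi j' l (t, y) * RicJ Psi k l (t, y) := by
    intro i' j'
    refine Finset.sum_congr rfl fun k _ => Finset.sum_congr rfl fun l _ => ?_
    rw [Tginv t y hp0, Tginv t y hp0, TRic t y hp0]
  have TrhoUp : rhoUp (F t) (R t) i y
      = ∑ j, GinvJ Phi i j (t, y) * Dv (sp n j) (rhoJ Phi Psi) (t, y) := by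
    refine Finset.sum_congr rfl fun j _ => ?_
    rw [Tginv t y hp0]
    congr 1
    apply pd_slice_at hU (rhoJ_smooth hU hPhi hPsi hdet) hp0
    filter_upwards [hyEv y hy] with z' hz'
    exact Trho t z' (hmemU t z' ht hz')
  -- final assembly
  rw [hL1, hL2, TrhoUp]
  have hg : ∀ a b' : Fin n, GinvJ Phi a b' (t, y) = GinvJ Phi b' a (t, y) :=
    fun a b' => GinvJ_symm hU hPhi hp0 a b'
  have halg := key_algebra (fun a b' => GinvJ Phi a b' (t, y))
    (fun a b' => RicJ Psi a b' (t, y)) (fun a b' c => Cj Phi a b' c (t, y))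
    (fun a b' c => Dv (sp n a) (RicJ Psi b' c) (t, y)) (fun j => IJ Phi j (t, y)) hg i
  calc ∑ j, (Dv (td n) (GinvJ Phi i j) (t, y) * IJ Phi j (t, y)
          + GinvJ Phi i j (t, y) * Dv (td n) (IJ Phi j) (t, y))
      = ∑ j, ((-∑ k, ∑ l, GinvJ Phi i k (t, y) * (-2 * RicJ Psi k l (t, y)) * GinvJ Phi l j (t, y)) * IJ Phi j (t, y)
          + GinvJ Phi i j (t, y) * (∑ k, ∑ l,
            ((-∑ m, ∑ q, GinvJ Phi k m (t, y) * (-2 * RicJ Psi m q (t, y)) * GinvJ Phi q l (t, y)) * Cj Phi j k l (t, y)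
              + GinvJ Phi k l (t, y) * (-(Dv (sp n j) (RicJ Psi k l) (t, y)))))) := by
        refine Finset.sum_congr rfl fun j _ => ?_
        rw [DtGinv i j, DtIJ j]
        congr 1
        congr 1
        refine Finset.sum_congr rfl fun k _ => Finset.sum_congr rfl fun l _ => ?_
        rw [DtGinv k l, DtCj j k l]
    _ = 2 * (∑ j, (∑ k, ∑ l, GinvJ Phi i k (t, y) * GinvJ Phi j l (t, y) * RicJ Psi k l (t, y)) * IJ Phi j (t, y))
          - ∑ j, GinvJ Phi i j (t, y) * (∑ k, ∑ l,
            ((-∑ m, ∑ q, GinvJ Phi k m (t, y) * (2 * Cj Phi j m q (t, y)) * GinvJ Phi q l (t, y)) * RicJ Psi k l (t, y)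
              + GinvJ Phi k l (t, y) * Dv (sp n j) (RicJ Psi k l) (t, y))) := halg
    _ = 2 * (∑ j, RicUp (F t) (R t) i j y * mC (F t) j y)
          - ∑ j, GinvJ Phi i j (t, y) * Dv (sp n j) (rhoJ Phi Psi) (t, y) := by
        congr 1
        · congr 1
          refine Finset.sum_congr rfl fun j _ => ?_
          rw [TRicUp i j, TmC t y hp0 j]
        · refine Finset.sum_congr rfl fun j _ => ?_
          congr 1
          rw [DspRho j]
          refine Finset.sum_congr rfl fun k _ => Finset.sum_congr rfl fun l _ => ?_
          rw [DspGinv j k l]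
end
end

section
/- Let F be a Minkowski norm on ℝ^n (n ≥ 2), let R : ℝ^n∖{0} → ℝ be smooth and positively 0-homogeneous, and let I_k be a covector field on ℝ^n∖{0} satisfying I_k y^k = 0 (for instance the mean Cartan torsion of F). If there exist functions A_{ij}(y) and B_i(y) such that R_{,i,j,k} = A_{ij}I_k + B_i g_{jk} for all y ≠ 0, then R_{,i} = 0 for all y ≠ 0; that is, R is constant on ℝ^n∖{0}. -/
open scoped BigOperators

noncomputable section

namespace ThirdDerivAux

variable {n : ℕ}

lemma isOpenU : IsOpen {y : Fin n → ℝ | y ≠ 0} := isOpen_ne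

/-- positive homogeneity of integer degree `d`. -/
def Hom (n : ℕ) (d : ℤ) (f : (Fin n → ℝ) → ℝ) : Prop :=
  ∀ y : Fin n → ℝ, y ≠ 0 → ∀ l : ℝ, 0 < l → f (l • y) = l ^ d * f y

lemma diffAt (f : (Fin n → ℝ) → ℝ) (hf : ContDiffOn ℝ (⊤ : ℕ∞) f {y : Fin n → ℝ | y ≠ 0})
    {y : Fin n → ℝ} (hy : y ≠ 0) : DifferentiableAt ℝ f y :=
  (hf.contDiffAt (isOpenU.mem_nhds hy)).differentiableAt (by simp)

lemma contDiffOn_pd (f : (Fin n → ℝ) → ℝ) (hf : ContDiffOn ℝ (⊤ : ℕ∞) f {y : Fin n → ℝ | y ≠ 0})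
    (i : Fin n) : ContDiffOn ℝ (⊤ : ℕ∞) (pd i f) {y : Fin n → ℝ | y ≠ 0} := by
  have h1 : ContDiffOn ℝ (⊤ : ℕ∞) (fderiv ℝ f) {y : Fin n → ℝ | y ≠ 0} :=
    hf.fderiv_of_isOpen isOpenU (by simp)
  exact h1.clm_apply contDiffOn_const

lemma fderiv_eq_sum_pd (f : (Fin n → ℝ) → ℝ) {y : Fin n → ℝ}
    (_hf : DifferentiableAt ℝ f y) (v : Fin n → ℝ) :
    fderiv ℝ f y v = ∑ k, v k * pd k f y := by
  have hv : (∑ k, v k • (Pi.single k (1 : ℝ) : Fin n → ℝ)) = v := by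
    ext j
    simp [Finset.sum_apply, Pi.single_apply]
  conv_lhs => rw [← hv]
  rw [map_sum]
  simp [pd, smul_eq_mul]

lemma euler (f : (Fin n → ℝ) → ℝ) (d : ℤ) {y : Fin n → ℝ} (hy : y ≠ 0)
    (hf : DifferentiableAt ℝ f y) (hhom : Hom n d f) :
    ∑ k, pd k f y * y k = d * f y := by
  have hs : HasDerivAt (fun t : ℝ => t • y) y 1 := by
    simpa using (hasDerivAt_id (1 : ℝ)).smul_const y
  have hF : HasFDerivAt f (fderiv ℝ f y) ((1 : ℝ) • y) := by
    rw [one_smul]; exact hf.hasFDerivAt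
  have h1 : HasDerivAt (fun t : ℝ => f (t • y)) (fderiv ℝ f y y) 1 := by
    exact hF.comp_hasDerivAt (1 : ℝ) hs
  have h2 : HasDerivAt (fun t : ℝ => t ^ d * f y) ((d : ℝ) * f y) 1 := by
    simpa using (hasDerivAt_zpow d (1 : ℝ) (Or.inl one_ne_zero)).mul_const (f y)
  have heq : (fun t : ℝ => f (t • y)) =ᶠ[nhds (1 : ℝ)] fun t : ℝ => t ^ d * f y := by
    filter_upwards [eventually_gt_nhds (zero_lt_one)] with t ht
    exact hhom y hy t ht
  have h1' : HasDerivAt (fun t : ℝ => t ^ d * f y) (fderiv ℝ f y y) 1 :=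
    h1.congr_of_eventuallyEq heq.symm
  have hkey : fderiv ℝ f y y = (d : ℝ) * f y := h1'.unique h2
  calc ∑ k, pd k f y * y k = ∑ k, y k * pd k f y := by
        exact Finset.sum_congr rfl fun k _ => mul_comm _ _
    _ = fderiv ℝ f y y := (fderiv_eq_sum_pd f hf y).symm
    _ = (d : ℝ) * f y := hkey

lemma hom_pd (f : (Fin n → ℝ) → ℝ) (d : ℤ)
    (hf : ContDiffOn ℝ (⊤ : ℕ∞) f {y : Fin n → ℝ | y ≠ 0}) (hhom : Hom n d f) (i : Fin n) :
    Hom n (d - 1) (pd i f) := by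
  intro y hy l hl
  have hl0 : l ≠ 0 := ne_of_gt hl
  have hly : l • y ≠ 0 := smul_ne_zero hl0 hy
  have hdl : DifferentiableAt ℝ f (l • y) := diffAt f hf hly
  have hd : DifferentiableAt ℝ f y := diffAt f hf hy
  have hc : HasFDerivAt (fun z : Fin n → ℝ => l • z)
      (l • ContinuousLinearMap.id ℝ (Fin n → ℝ)) y := by
    simpa using (l • ContinuousLinearMap.id ℝ (Fin n → ℝ)).hasFDerivAt (x := y)
  have hcomp : HasFDerivAt (fun z : Fin n → ℝ => f (l • z))
      ((fderiv ℝ f (l • y)).comp (l • ContinuousLinearMap.id ℝ (Fin n → ℝ))) y := by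
    exact hdl.hasFDerivAt.comp y hc
  have heq : (fun z : Fin n → ℝ => f (l • z)) =ᶠ[nhds y] fun z : Fin n → ℝ => l ^ d * f z := by
    filter_upwards [isOpenU.mem_nhds hy] with z hz
    exact hhom z hz l hl
  have h2 : HasFDerivAt (fun z : Fin n → ℝ => l ^ d * f z)
      ((fderiv ℝ f (l • y)).comp (l • ContinuousLinearMap.id ℝ (Fin n → ℝ))) y :=
    hcomp.congr_of_eventuallyEq heq.symm
  have h3 : HasFDerivAt (fun z : Fin n → ℝ => l ^ d * f z)
      ((l ^ d : ℝ) • fderiv ℝ f y) y := hd.hasFDerivAt.const_mul (l ^ d)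
  have h4 := h2.unique h3
  have h5 := congrArg (fun L : (Fin n → ℝ) →L[ℝ] ℝ => L (Pi.single i 1)) h4
  simp only [ContinuousLinearMap.coe_comp', Function.comp_apply,
    ContinuousLinearMap.smul_apply, ContinuousLinearMap.coe_id', id_eq, map_smul,
    smul_eq_mul] at h5
  -- h5 : l * (fderiv ℝ f (l • y)) (Pi.single i 1) = l ^ d * (fderiv ℝ f y) (Pi.single i 1)
  show pd i f (l • y) = l ^ (d - 1) * pd i f y
  apply mul_left_cancel₀ hl0
  calc l * pd i f (l • y) = l ^ d * pd i f y := h5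
    _ = l * (l ^ (d - 1) * pd i f y) := by
        rw [show l ^ d = l * l ^ (d - 1) by
          rw [mul_comm, ← zpow_add_one₀ hl0]; norm_num]
        ring

lemma pd_comm (f : (Fin n → ℝ) → ℝ) (hf : ContDiffOn ℝ (⊤ : ℕ∞) f {y : Fin n → ℝ | y ≠ 0})
    {y : Fin n → ℝ} (hy : y ≠ 0) (i j : Fin n) :
    pd i (pd j f) y = pd j (pd i f) y := by
  have hct : ContDiffAt ℝ (⊤ : ℕ∞) f y := hf.contDiffAt (isOpenU.mem_nhds hy)
  have hsym : IsSymmSndFDerivAt ℝ f y := hct.isSymmSndFDerivAt (by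
    rw [minSmoothness_of_isRCLikeNormedField]; exact WithTop.coe_le_coe.mpr le_top)
  have hdf : DifferentiableAt ℝ (fderiv ℝ f) y :=
    (hct.fderiv_right (m := 1) (WithTop.coe_le_coe.mpr le_top)).differentiableAt one_ne_zero
  have key : ∀ a b : Fin n,
      pd a (pd b f) y = fderiv ℝ (fderiv ℝ f) y (Pi.single a 1) (Pi.single b 1) := by
    intro a b
    show fderiv ℝ (fun z => fderiv ℝ f z (Pi.single b 1)) y (Pi.single a 1) = _
    rw [fderiv_clm_apply hdf (differentiableAt_const _)]
    simp
  rw [key i j, key j i, hsym (Pi.single i 1) (Pi.single j 1)]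

end ThirdDerivAux


open ThirdDerivAux in
theorem third_derivative_factorization_implies_constant
    {n : ℕ} (hn : 2 ≤ n) (F R : (Fin n → ℝ) → ℝ)
    (I : Fin n → (Fin n → ℝ) → ℝ)
    (hF : IsMinkowski F)
    (hR : ContDiffOn ℝ (⊤ : ℕ∞) R {y : Fin n → ℝ | y ≠ 0})
    (hRhom : ∀ y : Fin n → ℝ, y ≠ 0 → ∀ lam : ℝ, 0 < lam → R (lam • y) = R y)
    (hIy : ∀ y : Fin n → ℝ, y ≠ 0 → (∑ k, I k y * y k) = 0)
    (hfact : ∃ (A : Fin n → Fin n → (Fin n → ℝ) → ℝ) (B : Fin n → (Fin n → ℝ) → ℝ),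
      ∀ y : Fin n → ℝ, y ≠ 0 → ∀ i j k : Fin n,
        pd i (pd j (pd k R)) y = A i j y * I k y + B i y * gT F j k y) :
    (∀ y : Fin n → ℝ, y ≠ 0 → ∀ i : Fin n, pd i R y = 0) ∧
    (∀ y y' : Fin n → ℝ, y ≠ 0 → y' ≠ 0 → R y = R y') := by
  classical
  obtain ⟨hFs, hFpos, hFhom, -⟩ := hF
  obtain ⟨A, B, hAB⟩ := hfact
  set G : (Fin n → ℝ) → ℝ := fun z => F z ^ 2 with hG
  have hGs : ContDiffOn ℝ (⊤ : ℕ∞) G {y : Fin n → ℝ | y ≠ 0} := hFs.pow 2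
  have homG : Hom n 2 G := by
    intro y hy l hl
    show F (l • y) ^ 2 = l ^ (2 : ℤ) * F y ^ 2
    rw [hFhom y hy l hl, mul_pow,
      show (l : ℝ) ^ (2 : ℤ) = l ^ (2 : ℕ) from by rw [← zpow_natCast l 2]; norm_num]
  have homR : Hom n 0 R := by
    intro y hy l hl
    simpa using hRhom y hy l hl
  have hpdR : ∀ i, ContDiffOn ℝ (⊤ : ℕ∞) (pd i R) {y : Fin n → ℝ | y ≠ 0} :=
    fun i => contDiffOn_pd R hR i
  have homR1 : ∀ i, Hom n (0 - 1) (pd i R) := fun i => hom_pd R 0 hR homR i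
  have hpdR2 : ∀ i j, ContDiffOn ℝ (⊤ : ℕ∞) (pd i (pd j R)) {y : Fin n → ℝ | y ≠ 0} :=
    fun i j => contDiffOn_pd _ (hpdR j) i
  have homR2 : ∀ i j, Hom n (0 - 1 - 1) (pd i (pd j R)) :=
    fun i j => hom_pd (pd j R) (0 - 1) (hpdR j) (homR1 j) i
  have homG1 : ∀ j, Hom n (2 - 1) (pd j G) := fun j => hom_pd G 2 hGs homG j
  have part1 : ∀ y : Fin n → ℝ, y ≠ 0 → ∀ i : Fin n, pd i R y = 0 := by
    intro y hy i
    have hF2pos : (0 : ℝ) < F y ^ 2 := pow_pos (hFpos y hy) 2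
    have eR : ∑ k, pd k R y * y k = 0 := by
      simpa using euler R 0 hy (diffAt R hR hy) homR
    have eG : ∑ k, pd k G y * y k = 2 * G y := by
      simpa using euler G 2 hy (diffAt G hGs hy) homG
    have hyLow : ∀ j, yLow F j y = (1 / 2 : ℝ) * pd j G y := fun j => rfl
    have hyy : ∑ j, yLow F j y * y j = F y ^ 2 := by
      calc ∑ j, yLow F j y * y j = (1 / 2 : ℝ) * ∑ j, pd j G y * y j := by
            rw [Finset.mul_sum]
            exact Finset.sum_congr rfl fun j _ => by rw [hyLow]; ring
        _ = F y ^ 2 := by rw [eG]; show (1/2 : ℝ) * (2 * F y ^ 2) = F y ^ 2; ring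
    have hgTy : ∀ j, ∑ k, gT F j k y * y k = yLow F j y := by
      intro j
      have e1 : ∀ k, gT F j k y = (1 / 2 : ℝ) * pd k (pd j G) y := by
        intro k
        show (1 / 2 : ℝ) * pd j (pd k G) y = _
        rw [pd_comm G hGs hy j k]
      have e2 : ∑ k, pd k (pd j G) y * y k = pd j G y := by
        simpa using euler (pd j G) (2 - 1) hy (diffAt _ (contDiffOn_pd G hGs j) hy) (homG1 j)
      calc ∑ k, gT F j k y * y k = (1 / 2 : ℝ) * ∑ k, pd k (pd j G) y * y k := by
            rw [Finset.mul_sum]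
            exact Finset.sum_congr rfl fun k _ => by rw [e1]; ring
        _ = yLow F j y := by rw [e2, hyLow j]
    have hstar : ∀ a b : Fin n, (-2 : ℝ) * pd a (pd b R) y = B a y * yLow F b y := by
      intro a b
      have lhs1 : ∀ k, pd a (pd b (pd k R)) y = pd k (pd a (pd b R)) y := by
        intro k
        have hev : pd b (pd k R) =ᶠ[nhds y] pd k (pd b R) := by
          filter_upwards [isOpenU.mem_nhds hy] with z hz
          exact pd_comm R hR hz b k
        have e1 : pd a (pd b (pd k R)) y = pd a (pd k (pd b R)) y := by
          show fderiv ℝ (pd b (pd k R)) y (Pi.single a 1)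
              = fderiv ℝ (pd k (pd b R)) y (Pi.single a 1)
          rw [hev.fderiv_eq]
        rw [e1, pd_comm (pd b R) (hpdR b) hy a k]
      have e3 : ∑ k, pd k (pd a (pd b R)) y * y k = (-2 : ℝ) * pd a (pd b R) y := by
        have h := euler (pd a (pd b R)) (0 - 1 - 1) hy (diffAt _ (hpdR2 a b) hy) (homR2 a b)
        rw [h]; norm_num
      calc (-2 : ℝ) * pd a (pd b R) y = ∑ k, pd k (pd a (pd b R)) y * y k := e3.symm
        _ = ∑ k, pd a (pd b (pd k R)) y * y k :=
            Finset.sum_congr rfl fun k _ => by rw [lhs1 k]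
        _ = ∑ k, (A a b y * (I k y * y k) + B a y * (gT F b k y * y k)) :=
            Finset.sum_congr rfl fun k _ => by rw [hAB y hy a b k]; ring
        _ = A a b y * (∑ k, I k y * y k) + B a y * (∑ k, gT F b k y * y k) := by
            rw [Finset.sum_add_distrib, Finset.mul_sum, Finset.mul_sum]
        _ = B a y * yLow F b y := by rw [hIy y hy, hgTy b, mul_zero, zero_add]
    have hBa : ∀ a : Fin n, 2 * pd a R y = B a y * F y ^ 2 := by
      intro a
      have e4 : ∑ j, pd j (pd a R) y * y j = -pd a R y := by
        have h := euler (pd a R) (0 - 1) hy (diffAt _ (hpdR a) hy) (homR1 a)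
        rw [h]; norm_num
      have c1 : ∑ j, ((-2 : ℝ) * pd a (pd j R) y) * y j = 2 * pd a R y := by
        calc ∑ j, ((-2 : ℝ) * pd a (pd j R) y) * y j
            = (-2 : ℝ) * ∑ j, pd j (pd a R) y * y j := by
              rw [Finset.mul_sum]
              exact Finset.sum_congr rfl fun j _ => by rw [pd_comm R hR hy a j]; ring
          _ = 2 * pd a R y := by rw [e4]; ring
      have c2 : ∑ j, ((-2 : ℝ) * pd a (pd j R) y) * y j = B a y * F y ^ 2 := by
        calc ∑ j, ((-2 : ℝ) * pd a (pd j R) y) * y j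
            = ∑ j, (B a y * yLow F j y) * y j :=
              Finset.sum_congr rfl fun j _ => by rw [hstar a j]
          _ = B a y * ∑ j, yLow F j y * y j := by
              rw [Finset.mul_sum]
              exact Finset.sum_congr rfl fun j _ => by ring
          _ = B a y * F y ^ 2 := by rw [hyy]
      rw [← c1, c2]
    have hsym2 : ∀ a b : Fin n, pd a R y * yLow F b y = pd b R y * yLow F a y := by
      intro a b
      have h1 : B a y * yLow F b y = B b y * yLow F a y := by
        rw [← hstar a b, ← hstar b a, pd_comm R hR hy a b]
      have h2 : (B a y * F y ^ 2) * yLow F b y = (B b y * F y ^ 2) * yLow F a y := by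
        calc (B a y * F y ^ 2) * yLow F b y = (B a y * yLow F b y) * F y ^ 2 := by ring
          _ = (B b y * yLow F a y) * F y ^ 2 := by rw [h1]
          _ = (B b y * F y ^ 2) * yLow F a y := by ring
      rw [← hBa a, ← hBa b] at h2
      linear_combination h2 / 2
    have final : pd i R y * F y ^ 2 = 0 := by
      calc pd i R y * F y ^ 2 = pd i R y * ∑ j, yLow F j y * y j := by rw [hyy]
        _ = ∑ j, (pd i R y * yLow F j y) * y j := by
            rw [Finset.mul_sum]
            exact Finset.sum_congr rfl fun j _ => by ring
        _ = ∑ j, (pd j R y * yLow F i y) * y j :=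
            Finset.sum_congr rfl fun j _ => by rw [hsym2 i j]
        _ = yLow F i y * ∑ j, pd j R y * y j := by
            rw [Finset.mul_sum]
            exact Finset.sum_congr rfl fun j _ => by ring
        _ = 0 := by rw [eR, mul_zero]
    exact (mul_eq_zero.mp final).resolve_right (ne_of_gt hF2pos)
  refine ⟨part1, ?_⟩
  have hfz : ∀ y : Fin n → ℝ, y ≠ 0 → fderiv ℝ R y = 0 := by
    intro y hy
    apply ContinuousLinearMap.ext
    intro v
    rw [fderiv_eq_sum_pd R (diffAt R hR hy) v]
    simp [part1 y hy]
  intro y y' hy hy'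
  have hconn : IsPreconnected {z : Fin n → ℝ | z ≠ 0} := by
    have h1 : (1 : Cardinal) < Module.rank ℝ (Fin n → ℝ) := by
      rw [rank_fin_fun]
      exact_mod_cast (by omega : 1 < n)
    have h2 := (isConnected_compl_singleton_of_one_lt_rank h1 (0 : Fin n → ℝ)).isPreconnected
    have h3 : ({(0 : Fin n → ℝ)}ᶜ : Set (Fin n → ℝ)) = {z : Fin n → ℝ | z ≠ 0} := by
      ext z; simp
    rwa [h3] at h2
  letI : PreconnectedSpace ({z : Fin n → ℝ | z ≠ 0} : Set (Fin n → ℝ)) :=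
    Subtype.preconnectedSpace hconn
  have hlc : IsLocallyConstant
      (fun p : ({z : Fin n → ℝ | z ≠ 0} : Set (Fin n → ℝ)) => R p.1) := by
    rw [IsLocallyConstant.iff_exists_open]
    intro x
    obtain ⟨ε, hε, hball⟩ : ∃ ε > 0, Metric.ball (x : Fin n → ℝ) ε ⊆ {z : Fin n → ℝ | z ≠ 0} :=
      Metric.isOpen_iff.mp isOpenU _ x.2
    refine ⟨Subtype.val ⁻¹' Metric.ball (x : Fin n → ℝ) ε,
      Metric.isOpen_ball.preimage continuous_subtype_val,
      Set.mem_preimage.mpr (Metric.mem_ball_self hε), ?_⟩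
    intro x' hx'
    have hdo : DifferentiableOn ℝ R (Metric.ball (x : Fin n → ℝ) ε) := fun z hz =>
      (diffAt R hR (hball hz)).differentiableWithinAt
    have hzero : ∀ z ∈ Metric.ball (x : Fin n → ℝ) ε,
        fderivWithin ℝ R (Metric.ball (x : Fin n → ℝ) ε) z = 0 := by
      intro z hz
      rw [fderivWithin_of_isOpen Metric.isOpen_ball hz]
      exact hfz z (hball hz)
    exact (convex_ball _ _).is_const_of_fderivWithin_eq_zero hdo hzero hx'
      (Metric.mem_ball_self hε)
  exact hlc.apply_eq_of_preconnectedSpace ⟨y, hy⟩ ⟨y', hy'⟩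
end
end
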